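/- arXiv:1906.06257 — 6 statements merged into one kernel-verified Lean document; each statement's English description precedes it below -/
import Mathlib

section
/- Let A be an n×n real symmetric tridiagonal matrix with all subdiagonal entries nonzero, and let B be the principal submatrix obtained by deleting the last row and column. Then the eigenvalues μ₁ < ⋯ < μ_{n−1} of B strictly interlace the eigenvalues ω₁ < ⋯ < ωₙ of A: ω₁ < μ₁ < ω₂ < ⋯ < μ_{n−1} < ωₙ. -/
/-!
Write `a` for the corner entry of `A`, `b` for the rest of its last column and `B` for the
leading block. Expanding `det (x - A)` along the last row and column gives
`χ_A(x) = (x - a) χ_B(x) - bᴴ adj(x - B) b`, and at an eigenvalue `λ` of `B` with unit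
eigenvector `v`, diagonalising `B` shows `adj(λ - B) = χ_B'(λ) v vᴴ`. Hence
`χ_A(λ) = -|b ⬝ v|² χ_B'(λ)`. Since `A` is tridiagonal, `b` is a multiple of the last basis
vector, and `v` cannot vanish in its last entry because the eigenvector equation of an
irreducible tridiagonal matrix can be solved backwards from it; so `b ⬝ v ≠ 0`. Thus `χ_A(μᵢ)`
and `χ_B'(μᵢ)` have opposite signs, i.e. the number of `ω`s above `μᵢ` has the parity of `n - i`.
These counts decrease with `i` and the parities leave room only for exactly `n - i` of them,
which is the interlacing.
-/

open Polynomial Matrix Finset Fin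

theorem Matrix.det_succ_eq_mul_det_sub_adjugate {R : Type*} [CommRing R] {n : ℕ}
    (N : Matrix (Fin (n + 1)) (Fin (n + 1)) R) :
    N.det = N (last n) (last n) * (N.submatrix castSucc castSucc).det -
      (fun k ↦ N (last n) k.castSucc) ⬝ᵥ
        (adjugate (N.submatrix castSucc castSucc) *ᵥ fun i ↦ N i.castSucc (last n)) := by
  rcases n with _ | m
  · simp [det_unique]
  rw [det_succ_row N (last _), sum_univ_castSucc, succAbove_last, add_comm, sub_eq_add_neg]
  congr 1
  · simp [← two_mul, pow_mul]
  simp only [mulVec, dotProduct, mul_sum, ← sum_neg_distrib]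
  refine sum_congr rfl fun k _ ↦ ?_
  rw [det_succ_column _ (last m), mul_sum]
  refine sum_congr rfl fun i _ ↦ ?_
  have hk : (castSucc k).succAbove (last m) = last (m + 1) := by
    rw [succAbove_castSucc_of_le _ _ (le_last k), succ_last]
  rw [adjugate_fin_succ_eq_det_submatrix]
  simp only [submatrix_apply, submatrix_submatrix, Function.comp_def, succAbove_last,
    castSucc_succAbove_castSucc, hk, val_last, val_castSucc]
  have hsign : (-1 : R) ^ (m + 1 + (k : ℕ)) * (-1) ^ ((i : ℕ) + m) = -(-1) ^ ((i : ℕ) + k) := by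
    rw [← pow_add, show m + 1 + (k : ℕ) + (i + m) = i + k + 1 + 2 * m by ring, pow_add, pow_add,
      pow_mul]
    simp
  linear_combination (N (last (m + 1)) k.castSucc * N i.castSucc (last (m + 1)) *
    (N.submatrix (fun x ↦ (i.succAbove x).castSucc) fun x ↦ (k.succAbove x).castSucc).det) * hsign

theorem Matrix.adjugate_mul_mul_star_of_mem_unitary {n α : Type*} [Fintype n] [DecidableEq n]
    [CommRing α] [StarRing α] {U : Matrix n n α} (hU : U ∈ unitary (Matrix n n α))
    (M : Matrix n n α) :
    adjugate (U * M * star U) = U * adjugate M * star U := by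
  have hadj {V : Matrix n n α} (hV : V ∈ unitary (Matrix n n α)) :
      adjugate V = V.det • star V := by
    rw [← Matrix.one_mul (adjugate V), ← Unitary.star_mul_self_of_mem hV, Matrix.mul_assoc,
      mul_adjugate, Matrix.mul_smul, Matrix.mul_one]
  have hdet : U.det * (star U).det = 1 := by
    rw [← det_mul, Unitary.mul_star_self_of_mem hU, det_one]
  rw [adjugate_mul_distrib, adjugate_mul_distrib, hadj hU, hadj (Unitary.star_mem hU), star_star]
  simp only [Matrix.smul_mul, Matrix.mul_smul, smul_smul, hdet, one_smul, Matrix.mul_assoc]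

theorem Matrix.eq_zero_of_mulVec_eq_smul_of_apply_last_eq_zero {R : Type*} [Ring R]
    [NoZeroDivisors R] {m : ℕ} {B : Matrix (Fin (m + 1)) (Fin (m + 1)) R}
    (hB : ∀ i j : Fin (m + 1), (j : ℕ) + 1 < i → B i j = 0)
    (hsub : ∀ k : Fin m, B k.succ k.castSucc ≠ 0) {t : R} {u : Fin (m + 1) → R}
    (hu : B *ᵥ u = t • u) (hlast : u (last m) = 0) : u = 0 := by
  suffices h : ∀ k j, k ≤ j → u j = 0 from funext fun j ↦ h j j le_rfl
  refine reverseInduction (fun j hj ↦ by rwa [last_le_iff.1 hj]) fun k ih j hj ↦ ?_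
  obtain hlt | rfl := hj.lt_or_eq
  · exact ih j (castSucc_lt_iff_succ_le.1 hlt)
  have hrow : B k.succ k.castSucc * u k.castSucc = 0 :=
    calc B k.succ k.castSucc * u k.castSucc = (B *ᵥ u) k.succ := by
          rw [mulVec, dotProduct, Fintype.sum_eq_single k.castSucc]
          intro j hj
          obtain hlt | hgt := lt_or_gt_of_ne hj
          · rw [hB _ _ (by simpa [lt_def] using hlt), zero_mul]
          · rw [ih j (castSucc_lt_iff_succ_le.1 hgt), mul_zero]
      _ = 0 := by rw [hu, Pi.smul_apply, ih k.succ le_rfl, smul_zero]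
  exact (mul_eq_zero.1 hrow).resolve_left (hsub k)

theorem Polynomial.eval_derivative_prod_X_sub_C_self {ι R : Type*} [Fintype ι] [DecidableEq ι]
    [CommRing R] (f : ι → R) (i : ι) :
    (derivative (∏ j, (X - C (f j)))).eval (f i) = ∏ j ∈ univ.erase i, (f i - f j) := by
  rw [← Lagrange.nodal_eq, Lagrange.eval_nodal_derivative_eval_node_eq (mem_univ i),
    Lagrange.eval_nodal]

namespace Matrix.IsHermitian

variable {𝕜 : Type*} [RCLike 𝕜]

theorem scalar_sub_eq_eigenvectorUnitary_mul {n : Type*} [Fintype n] [DecidableEq n]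
    {B : Matrix n n 𝕜} (hB : B.IsHermitian) (x : 𝕜) :
    scalar n x - B = (hB.eigenvectorUnitary : Matrix n n 𝕜) *
      diagonal (fun l ↦ x - hB.eigenvalues l) * star (hB.eigenvectorUnitary : Matrix n n 𝕜) := by
  set U : Matrix n n 𝕜 := (hB.eigenvectorUnitary : Matrix n n 𝕜)
  have hU : U * star U = 1 := Unitary.mul_star_self_of_mem hB.eigenvectorUnitary.2
  have hBU : B = U * diagonal (RCLike.ofReal ∘ hB.eigenvalues) * star U := hB.spectral_theorem
  calc scalar n x - B
      = U * scalar n x * star U - U * diagonal (RCLike.ofReal ∘ hB.eigenvalues) * star U := by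
        rw [← hBU, ← scalar_commute x (fun _ ↦ Commute.all _ _) U, Matrix.mul_assoc, hU,
          Matrix.mul_one]
    _ = _ := by rw [← Matrix.sub_mul, ← Matrix.mul_sub, scalar_apply, diagonal_sub]; rfl

theorem adjugate_scalar_eigenvalues_sub {n : Type*} [Fintype n] [DecidableEq n]
    {B : Matrix n n 𝕜} (hB : B.IsHermitian) (k : n) :
    Matrix.adjugate (scalar n (hB.eigenvalues k : 𝕜) - B) =
      (∏ l ∈ univ.erase k, ((hB.eigenvalues k : 𝕜) - hB.eigenvalues l)) •
        vecMulVec ⇑(hB.eigenvectorBasis k) (star ⇑(hB.eigenvectorBasis k)) := by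
  rw [hB.scalar_sub_eq_eigenvectorUnitary_mul,
    adjugate_mul_mul_star_of_mem_unitary hB.eigenvectorUnitary.2, adjugate_diagonal]
  ext i j
  rw [mul_apply, sum_eq_single k]
  · simp [vecMulVec_apply, star_apply]
    ring
  · intro l _ hlk
    rw [mul_diagonal, prod_eq_zero (mem_erase.2 ⟨hlk.symm, mem_univ k⟩) (sub_self _)]
    simp
  · simp

theorem eval_charpoly_eigenvalues_submatrix_castSucc {n : ℕ}
    {A : Matrix (Fin (n + 1)) (Fin (n + 1)) 𝕜} (hA : A.IsHermitian)
    (hB : (A.submatrix castSucc castSucc).IsHermitian) (k : Fin n) :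
    A.charpoly.eval (hB.eigenvalues k : 𝕜) =
      -(‖(fun j ↦ A (last n) j.castSucc) ⬝ᵥ ⇑(hB.eigenvectorBasis k)‖ : 𝕜) ^ 2 *
        (derivative (A.submatrix castSucc castSucc).charpoly).eval (hB.eigenvalues k : 𝕜) := by
  set x : 𝕜 := (hB.eigenvalues k : 𝕜)
  have hblock : (scalar (Fin (n + 1)) x - A).submatrix castSucc castSucc =
      scalar (Fin n) x - A.submatrix castSucc castSucc := by
    ext i j
    simp [diagonal_apply, castSucc_inj]
  have hdet : (scalar (Fin n) x - A.submatrix castSucc castSucc).det = 0 := by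
    rw [← eval_charpoly, hB.charpoly_eq, eval_prod]
    exact prod_eq_zero (mem_univ k) (by simp [x])
  have hrow : (fun j ↦ (scalar (Fin (n + 1)) x - A) (last n) j.castSucc) =
      -fun j : Fin n ↦ A (last n) j.castSucc := by
    ext j
    simp [(castSucc_lt_last j).ne']
  have hcol : (fun i ↦ (scalar (Fin (n + 1)) x - A) i.castSucc (last n)) =
      -star fun j : Fin n ↦ A (last n) j.castSucc := by
    ext i
    simp [(castSucc_lt_last i).ne, ← hA.apply i.castSucc (last n)]
  rw [hB.charpoly_eq, eval_derivative_prod_X_sub_C_self (fun l ↦ (hB.eigenvalues l : 𝕜)),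
    eval_charpoly, det_succ_eq_mul_det_sub_adjugate, hblock, hdet,
    hB.adjugate_scalar_eigenvalues_sub, hrow, hcol, mul_zero, zero_sub, neg_dotProduct, mulVec_neg,
    dotProduct_neg, neg_neg, smul_mulVec, vecMulVec_mulVec, star_dotProduct_star, dotProduct_smul,
    dotProduct_smul, op_smul_eq_mul, smul_eq_mul, ← RCLike.mul_conj, RCLike.star_def]
  ring

theorem dotProduct_last_eigenvectorBasis_ne_zero {m : ℕ}
    {A : Matrix (Fin (m + 2)) (Fin (m + 2)) 𝕜} (hA : A.IsHermitian)
    (htri : ∀ i j : Fin (m + 2), 1 < |(i : ℤ) - (j : ℤ)| → A i j = 0)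
    (hsub : ∀ i j : Fin (m + 2), (j : ℕ) = (i : ℕ) + 1 → A i j ≠ 0)
    (hB : (A.submatrix castSucc castSucc).IsHermitian) (k : Fin (m + 1)) :
    (fun j ↦ A (last (m + 1)) j.castSucc) ⬝ᵥ ⇑(hB.eigenvectorBasis k) ≠ 0 := by
  set u : Fin (m + 1) → 𝕜 := ⇑(hB.eigenvectorBasis k)
  have hdot : (fun j ↦ A (last (m + 1)) j.castSucc) ⬝ᵥ u =
      A (last (m + 1)) (last m).castSucc * u (last m) := by
    refine Fintype.sum_eq_single _ fun j hj ↦ ?_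
    have hj' : (j : ℕ) < m := val_lt_last hj
    dsimp only
    rw [htri _ _ (by simp only [val_last, val_castSucc]; rw [lt_abs]; omega), zero_mul]
  have hA0 : A (last (m + 1)) (last m).castSucc ≠ 0 := by
    rw [← hA.apply, star_ne_zero]
    exact hsub _ _ (by simp)
  have hu0 : u (last m) ≠ 0 := by
    intro hu
    refine hB.eigenvectorBasis.orthonormal.ne_zero k ((WithLp.ofLp_eq_zero 2).1 ?_)
    refine eq_zero_of_mulVec_eq_smul_of_apply_last_eq_zero (B := A.submatrix castSucc castSucc)
      (t := (hB.eigenvalues k : 𝕜)) (fun i j hij ↦ htri i.castSucc j.castSucc ?_) (fun i ↦ ?_) ?_ hu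
    · simp only [val_castSucc]
      rw [lt_abs]
      omega
    · rw [submatrix_apply, ← hA.apply, star_ne_zero]
      exact hsub _ _ (by simp)
    · rw [hB.mulVec_eigenvectorBasis, RCLike.real_smul_eq_coe_smul (K := 𝕜)]
  rw [hdot]
  exact mul_ne_zero hA0 hu0

end Matrix.IsHermitian

theorem Finset.prod_eq_neg_one_pow_card_filter_neg_mul_prod_abs {ι R : Type*} [CommRing R]
    [LinearOrder R] [IsStrictOrderedRing R] (s : Finset ι) (f : ι → R) :
    ∏ i ∈ s, f i = (-1) ^ #{i ∈ s | f i < 0} * ∏ i ∈ s, |f i| := by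
  have hf (i : ι) : f i = (if f i < 0 then -1 else 1) * |f i| := by
    split_ifs with h
    · rw [abs_of_neg h, neg_one_mul, neg_neg]
    · rw [abs_of_nonneg (not_lt.1 h), one_mul]
  conv_lhs => rw [prod_congr rfl fun i _ ↦ hf i]
  rw [prod_mul_distrib, prod_ite, prod_const, prod_const, one_pow, mul_one]

theorem Fin.eq_sub_of_antitone_of_odd_add {n : ℕ} {s : Fin n → ℕ} (hs : Antitone s)
    (hle : ∀ i, s i ≤ n + 1) (hodd : ∀ i : Fin n, Odd (s i + (n - 1 - i))) (i : Fin n) :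
    s i = n - i := by
  rcases n with _ | m
  · exact i.elim0
  replace hodd (j : Fin (m + 1)) : s j % 2 = (m - j + 1) % 2 := by
    have := Nat.odd_iff.1 (hodd j)
    omega
  -- Consecutive values of `s` have different parities, so `s` drops by at least one per step.
  have hanti : Antitone fun j ↦ s j + j := by
    refine Fin.antitone_iff_succ_le.2 fun j ↦ ?_
    have h1 := hodd j.succ
    have h2 := hodd j.castSucc
    have := hs (castSucc_le_succ j)
    simp only [val_succ, val_castSucc] at h1 h2 ⊢
    omega
  have h0 := hodd 0
  have h0' := hle 0
  have hl := hodd (last m)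
  have hi0 := hanti (Fin.zero_le i)
  have hil := hanti (le_last i)
  simp only [Fin.val_zero, val_last] at h0 hl hi0 hil
  omega

theorem StrictMono.lt_and_lt_of_card_filter_lt_eq {α : Type*} [LinearOrder α] {n : ℕ}
    {ω : Fin (n + 1) → α} (hω : StrictMono ω) {x : α} (hx : ∀ k, x ≠ ω k) {i : Fin n}
    (hcard : #{k | x < ω k} = n - i) :
    ω i.castSucc < x ∧ x < ω i.succ := by
  constructor
  · by_contra! hle
    have hsub : Ici i.castSucc ⊆ ({k | x < ω k} : Finset _) := fun k hk ↦
      mem_filter.2 ⟨mem_univ k, (hle.lt_of_ne (hx _)).trans_le (hω.monotone (mem_Ici.1 hk))⟩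
    have := card_le_card hsub
    rw [card_Ici, hcard, val_castSucc] at this
    omega
  · by_contra! hle
    have hsub : ({k | x < ω k} : Finset _) ⊆ Ioi i.succ := fun k hk ↦
      mem_Ioi.2 (hω.lt_iff_lt.1 (hle.trans_lt (mem_filter.1 hk).2))
    have := card_le_card hsub
    rw [card_Ioi, hcard, val_succ] at this
    omega

theorem StrictMono.interlace_of_prod_sub_mul_prod_sub_neg {n : ℕ} {R : Type*} [CommRing R]
    [LinearOrder R] [IsStrictOrderedRing R] {ω : Fin (n + 1) → R} {μ : Fin n → R}
    (hω : StrictMono ω) (hμ : StrictMono μ)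
    (hsign : ∀ i, (∏ k, (μ i - ω k)) * ∏ j ∈ univ.erase i, (μ i - μ j) < 0) (i : Fin n) :
    ω i.castSucc < μ i ∧ μ i < ω i.succ := by
  have hne (i : Fin n) (k : Fin (n + 1)) : μ i ≠ ω k := fun h ↦ (hsign i).ne <| by
    rw [prod_eq_zero_iff.2 ⟨k, mem_univ k, sub_eq_zero.2 h⟩, zero_mul]
  have hodd (i : Fin n) : Odd (#{k | μ i < ω k} + (n - 1 - i)) := by
    have hbelow : #{j ∈ univ.erase i | μ i - μ j < 0} = n - 1 - i := by
      rw [← card_Ioi]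
      congr 1
      ext j
      simpa [hμ.lt_iff_lt] using fun h ↦ h.ne'
    have h := hsign i
    rw [prod_eq_neg_one_pow_card_filter_neg_mul_prod_abs univ,
      prod_eq_neg_one_pow_card_filter_neg_mul_prod_abs (univ.erase i), hbelow] at h
    simp only [sub_neg] at h
    by_contra hev
    rw [Nat.not_odd_iff_even] at hev
    rw [mul_mul_mul_comm, ← pow_add, hev.neg_one_pow, one_mul] at h
    exact (mul_nonneg (prod_nonneg fun _ _ ↦ abs_nonneg _)
      (prod_nonneg fun _ _ ↦ abs_nonneg _)).not_gt h
  refine hω.lt_and_lt_of_card_filter_lt_eq (hne i)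
    (Fin.eq_sub_of_antitone_of_odd_add ?_ ?_ hodd i)
  · intro a b hab
    exact card_le_card fun k hk ↦ by
      simp only [mem_filter, mem_univ, true_and] at hk ⊢
      exact (hμ.monotone hab).trans_lt hk
  · exact fun j ↦ (card_filter_le _ _).trans (by simp)

/-- Strict interlacing of the eigenvalues of an irreducible real symmetric tridiagonal
matrix and those of its trailing principal submatrix. -/
theorem tridiagonal_strict_interlacing
    (n : ℕ) (A : Matrix (Fin (n + 1)) (Fin (n + 1)) ℝ) (hA : A.IsHermitian)
    (htri : ∀ i j : Fin (n + 1), 1 < |(i : ℤ) - (j : ℤ)| → A i j = 0)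
    (hsub : ∀ i j : Fin (n + 1), (j : ℕ) = (i : ℕ) + 1 → A i j ≠ 0)
    (B : Matrix (Fin n) (Fin n) ℝ)
    (hB : B = A.submatrix Fin.castSucc Fin.castSucc)
    (ω : Fin (n + 1) → ℝ) (hω : StrictMono ω)
    (hωroots : A.charpoly = ∏ i, (X - C (ω i)))
    (μ : Fin n → ℝ) (hμ : StrictMono μ)
    (hμroots : B.charpoly = ∏ i, (X - C (μ i))) :
    ∀ i : Fin n, ω i.castSucc < μ i ∧ μ i < ω i.succ := by
  rcases n with _ | m
  · exact fun i ↦ i.elim0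
  subst hB
  have hBH : (A.submatrix castSucc castSucc).IsHermitian := hA.submatrix castSucc
  refine hω.interlace_of_prod_sub_mul_prod_sub_neg hμ fun i ↦ ?_
  obtain ⟨k, hk⟩ : ∃ k, hBH.eigenvalues k = μ i := by
    have hroot := congrArg (eval (μ i)) (hμroots.symm.trans hBH.charpoly_eq)
    simp only [eval_prod, eval_sub, eval_X, eval_C] at hroot
    obtain ⟨k, -, hk⟩ := prod_eq_zero_iff.1 (hroot ▸ prod_eq_zero (mem_univ i) (sub_self _))
    exact ⟨k, (sub_eq_zero.1 hk).symm⟩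
  have hc := hA.dotProduct_last_eigenvectorBasis_ne_zero htri hsub hBH k
  have hsec := hA.eval_charpoly_eigenvalues_submatrix_castSucc hBH k
  simp only [RCLike.ofReal_real_eq_id, id, hk, hωroots, hμroots, eval_prod, eval_sub, eval_X,
    eval_C, Real.norm_eq_abs, sq_abs] at hsec
  rw [eval_derivative_prod_X_sub_C_self] at hsec
  have hQ : ∏ j ∈ univ.erase i, (μ i - μ j) ≠ 0 :=
    prod_ne_zero_iff.2 fun j hj ↦ sub_ne_zero.2 (hμ.injective.ne (ne_of_mem_erase hj).symm)
  have hpos : 0 < ((fun j ↦ A (last (m + 1)) j.castSucc) ⬝ᵥ ⇑(hBH.eigenvectorBasis k)) ^ 2 *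
      (∏ j ∈ univ.erase i, (μ i - μ j)) ^ 2 := by positivity
  rw [hsec]
  linarith
end

section
/- Given real numbers ω₁ < μ₁ < ω₂ < ⋯ < μ_{n−1} < ωₙ, there exists a real symmetric tridiagonal n×n matrix J with positive off-diagonal entries such that the spectrum of J is {ω₁,…,ωₙ} and the spectrum of the principal submatrix of J obtained by deleting the last row and column is {μ₁,…,μ_{n−1}}. Moreover, such J is unique. -/
/-!
Expanding the determinant along the last row and column gives, for a Jacobi matrix `J` with last
diagonal entry `a` and last off-diagonal entry `b`, the three-term recurrence
`χ J = (X - a) χ J' - b² χ J''`, where `J'` and `J''` delete the last one and two rows and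
columns. Since `deg χ J'' < deg χ J'`, this is the Euclidean division of `χ J` by `χ J'`; so `χ J`
and `χ J'` determine `a`, `b > 0` and `χ J''`, and uniqueness follows by induction.

For existence, divide `p = ∏ (X - ωᵢ)` by `q = ∏ (X - μᵢ)`: `p = (X - a) q - s` with
`deg s < deg q`. At the roots of `q` we have `s = -p`, which alternates in sign (exactly one `ω`
lies between consecutive `μ`'s) and is positive at the largest `μ`. Hence `s = c ∏ (X - νᵢ)`
with `c > 0` and the `ν`'s strictly interlacing the `μ`'s; induction gives `J'` for `(μ, ν)`, and
bordering it by `a` and `b = √c` gives `J`.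
-/

open Polynomial Matrix

section ProdSign

variable {R ι : Type*} [CommRing R] [LinearOrder R] [IsStrictOrderedRing R]
  [Fintype ι] [DecidableEq ι] {ω : ι → R} {x y : R}

theorem prod_sub_neg_of_lt (k : ι) (hxk : x < ω k) (hout : ∀ j ≠ k, ω j < x) :
    ∏ j, (x - ω j) < 0 := by
  rw [← Finset.mul_prod_erase _ _ (Finset.mem_univ k)]
  refine mul_neg_of_neg_of_pos (sub_neg.2 hxk) (Finset.prod_pos fun j hj => ?_)
  exact sub_pos.2 (hout j (Finset.ne_of_mem_erase hj))

theorem prod_sub_mul_prod_sub_neg (k : ι) (hxk : x < ω k) (hky : ω k < y)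
    (hout : ∀ j ≠ k, ω j < x ∨ y < ω j) :
    (∏ j, (x - ω j)) * ∏ j, (y - ω j) < 0 := by
  rw [← Finset.prod_mul_distrib, ← Finset.mul_prod_erase _ _ (Finset.mem_univ k)]
  refine mul_neg_of_neg_of_pos (mul_neg_of_neg_of_pos (sub_neg.2 hxk) (sub_pos.2 hky))
    (Finset.prod_pos fun j hj => ?_)
  rcases hout j (Finset.ne_of_mem_erase hj) with hj | hj
  · exact mul_pos (sub_pos.2 hj) (sub_pos.2 (hj.trans (hxk.trans hky)))
  · exact mul_pos_of_neg_of_neg (sub_neg.2 ((hxk.trans hky).trans hj)) (sub_neg.2 hj)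

end ProdSign

section Interlacing

variable {α : Type*} [Preorder α] {n : ℕ}

def Interlaces (ω : Fin (n + 1) → α) (μ : Fin n → α) : Prop :=
  ∀ i : Fin n, ω i.castSucc < μ i ∧ μ i < ω i.succ

namespace Interlaces

variable {ω : Fin (n + 1) → α} {μ : Fin n → α}

theorem strictMono_left (h : Interlaces ω μ) : StrictMono ω :=
  Fin.strictMono_iff_lt_succ.2 fun i => (h i).1.trans (h i).2

theorem lt_of_le_castSucc (h : Interlaces ω μ) {i : Fin n} {j : Fin (n + 1)}
    (hj : j ≤ i.castSucc) : ω j < μ i :=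
  (h.strictMono_left.monotone hj).trans_lt (h i).1

theorem lt_of_succ_le (h : Interlaces ω μ) {i : Fin n} {j : Fin (n + 1)}
    (hj : i.succ ≤ j) : μ i < ω j :=
  (h i).2.trans_le (h.strictMono_left.monotone hj)

theorem strictMono_right (h : Interlaces ω μ) : StrictMono μ := fun _ _ hij =>
  (h.lt_of_succ_le le_rfl).trans (h.lt_of_le_castSucc (Fin.succ_le_castSucc_iff.2 hij))

section OrderedRing

variable {R : Type*} [CommRing R] [LinearOrder R] [IsStrictOrderedRing R]
  {ω : Fin (n + 2) → R} {μ : Fin (n + 1) → R}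

theorem prod_castSucc_sub_mul_prod_succ_sub_neg (h : Interlaces ω μ) (i : Fin n) :
    (∏ j, (μ i.castSucc - ω j)) * ∏ j, (μ i.succ - ω j) < 0 := by
  refine prod_sub_mul_prod_sub_neg i.succ.castSucc ?_ (h i.succ).1 fun j hj => ?_
  · rw [← Fin.succ_castSucc]
    exact (h i.castSucc).2
  · rcases hj.lt_or_gt with hj | hj
    · left
      exact h.lt_of_le_castSucc (Fin.le_castSucc_iff.2 (Fin.succ_castSucc i ▸ hj))
    · right
      exact h.lt_of_succ_le (Fin.castSucc_lt_iff_succ_le.1 hj)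

theorem prod_last_sub_neg (h : Interlaces ω μ) : ∏ j, (μ (Fin.last n) - ω j) < 0 :=
  prod_sub_neg_of_lt (Fin.last _) (by simpa using (h (Fin.last n)).2) fun j hj =>
    h.lt_of_le_castSucc (Fin.le_castSucc_iff.2 (by simpa using Fin.lt_last_iff_ne_last.2 hj))

end OrderedRing

end Interlaces

end Interlacing

namespace Polynomial

theorem exists_X_sub_C_mul_sub {R : Type*} [CommRing R] [Nontrivial R] {p q : R[X]}
    (hp : p.Monic) (hq : q.Monic) (hdeg : p.natDegree = q.natDegree + 1) :
    ∃ a s, p = (X - C a) * q - s ∧ s.degree < q.degree := by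
  have hle : q.degree ≤ p.degree := by
    rw [degree_eq_natDegree hq.ne_zero, degree_eq_natDegree hp.ne_zero, hdeg]
    exact_mod_cast Nat.le_succ _
  have hd : (p /ₘ q).Monic := by
    rw [Monic, leadingCoeff_divByMonic_of_monic hq hle, hp.leadingCoeff]
  have hd1 : (p /ₘ q).natDegree = 1 := by
    rw [natDegree_divByMonic _ hq, hdeg]
    omega
  refine ⟨-(p /ₘ q).coeff 0, -(p %ₘ q), ?_, (degree_neg _).trans_lt (degree_modByMonic_lt _ hq)⟩
  have hdiv := modByMonic_add_div p q
  rw [hd.eq_X_add_C hd1] at hdiv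
  rw [map_neg]
  linear_combination -hdiv

theorem exists_mem_Ioo_isRoot_of_eval_mul_neg (p : ℝ[X]) {a b : ℝ} (hab : a ≤ b)
    (h : p.eval a * p.eval b < 0) : ∃ x ∈ Set.Ioo a b, p.IsRoot x := by
  rcases mul_neg_iff.1 h with ⟨ha, hb⟩ | ⟨ha, hb⟩
  · exact intermediate_value_Ioo' hab p.continuous.continuousOn ⟨hb, ha⟩
  · exact intermediate_value_Ioo hab p.continuous.continuousOn ⟨ha, hb⟩

theorem exists_eq_C_mul_prod_X_sub_C {K ι : Type*} [Field K] [Fintype ι] {p : K[X]}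
    {ν : ι → K} (hp : p ≠ 0) (hdeg : p.natDegree ≤ Fintype.card ι)
    (hν : Function.Injective ν) (hroot : ∀ i, p.IsRoot (ν i)) :
    ∃ c, p = C c * ∏ i, (X - C (ν i)) := by
  obtain ⟨g, hg⟩ := Fintype.prod_dvd_of_coprime (pairwise_coprime_X_sub_C hν)
    fun i => dvd_iff_isRoot.2 (hroot i)
  have hg0 : g ≠ 0 := by
    rintro rfl
    simp [hp] at hg
  have hgdeg : g.natDegree = 0 := by
    have := congrArg natDegree hg
    rw [natDegree_mul (Finset.prod_ne_zero_iff.2 fun i _ => X_sub_C_ne_zero (ν i)) hg0,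
      natDegree_finsetProd_X_sub_C_eq_card, Finset.card_univ] at this
    omega
  exact ⟨g.coeff 0, by rw [hg, mul_comm, ← eq_C_of_natDegree_eq_zero hgdeg]⟩

theorem exists_interlaces_eq_C_mul_prod_of_eval_alternating {m : ℕ} {s : ℝ[X]}
    {μ : Fin (m + 1) → ℝ} (hμ : Monotone μ) (hdeg : s.natDegree ≤ m)
    (halt : ∀ i : Fin m, s.eval (μ i.castSucc) * s.eval (μ i.succ) < 0)
    (hlast : 0 < s.eval (μ (Fin.last m))) :
    ∃ c > 0, ∃ ν : Fin m → ℝ, Interlaces μ ν ∧ s = C c * ∏ i, (X - C (ν i)) := by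
  choose ν hν hroot using fun i : Fin m =>
    s.exists_mem_Ioo_isRoot_of_eval_mul_neg (hμ (Fin.castSucc_le_succ i)) (halt i)
  have hint : Interlaces μ ν := fun i => hν i
  have hs : s ≠ 0 := by
    rintro rfl
    simp at hlast
  obtain ⟨c, rfl⟩ := exists_eq_C_mul_prod_X_sub_C hs (by simpa using hdeg)
    hint.strictMono_right.injective hroot
  refine ⟨c, ?_, ν, hint, rfl⟩
  have hprod : 0 < ∏ i, (μ (Fin.last m) - ν i) :=
    Finset.prod_pos fun i _ => sub_pos.2 (hint.lt_of_succ_le (Fin.le_last _))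
  simp only [eval_mul, eval_C, eval_prod, eval_sub, eval_X] at hlast
  exact pos_of_mul_pos_left hlast hprod.le

end Polynomial

namespace Matrix

section Border

variable {α : Type*} {n : ℕ}

/-- The symmetric bordering `!![A, v; vᵀ, a]`. -/
def borderLast (A : Matrix (Fin n) (Fin n) α) (v : Fin n → α) (a : α) :
    Matrix (Fin (n + 1)) (Fin (n + 1)) α :=
  of fun i j => Fin.lastCases (Fin.lastCases a v j) (fun i => Fin.lastCases (v i) (A i) j) i

variable (A : Matrix (Fin n) (Fin n) α) (v : Fin n → α) (a : α)

@[simp] theorem borderLast_castSucc_castSucc (i j : Fin n) :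
    borderLast A v a i.castSucc j.castSucc = A i j := by
  simp [borderLast]

@[simp] theorem borderLast_castSucc_last (i : Fin n) :
    borderLast A v a i.castSucc (Fin.last n) = v i := by
  simp [borderLast]

@[simp] theorem borderLast_last_castSucc (j : Fin n) :
    borderLast A v a (Fin.last n) j.castSucc = v j := by
  simp [borderLast]

@[simp] theorem borderLast_last_last : borderLast A v a (Fin.last n) (Fin.last n) = a := by
  simp [borderLast]

@[simp] theorem submatrix_borderLast :
    (borderLast A v a).submatrix Fin.castSucc Fin.castSucc = A := by
  ext i j
  simp

end Border

theorem IsSymm.borderLast {α : Type*} {n : ℕ} {A : Matrix (Fin n) (Fin n) α} (hA : A.IsSymm)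
    (v : Fin n → α) (a : α) : (borderLast A v a).IsSymm := by
  ext i j
  induction i using Fin.lastCases <;> induction j using Fin.lastCases <;> simp [hA.apply]

section Tridiagonal

variable {α : Type*} [Zero α] {n : ℕ}

def IsTridiagonal (M : Matrix (Fin n) (Fin n) α) : Prop :=
  ∀ k l : Fin n, 1 < |(k : ℤ) - (l : ℤ)| → M k l = 0

theorem IsTridiagonal.borderLast_single {A : Matrix (Fin (n + 1)) (Fin (n + 1)) α}
    (hA : A.IsTridiagonal) (b a : α) :
    (borderLast A (Pi.single (Fin.last n) b) a).IsTridiagonal := by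
  intro k l hkl
  induction k using Fin.lastCases <;> induction l using Fin.lastCases
  · simp at hkl
  · rw [borderLast_last_castSucc, Pi.single_eq_of_ne]
    rintro rfl
    simp at hkl
  · rw [borderLast_castSucc_last, Pi.single_eq_of_ne]
    rintro rfl
    simp at hkl
  · simpa using hA _ _ (by simpa using hkl)

theorem IsTridiagonal.eq_borderLast {M : Matrix (Fin (n + 2)) (Fin (n + 2)) α}
    (hT : M.IsTridiagonal) (hS : M.IsSymm) :
    M = borderLast (M.submatrix Fin.castSucc Fin.castSucc)
      (Pi.single (Fin.last n) (M (Fin.last n).castSucc (Fin.last (n + 1))))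
      (M (Fin.last (n + 1)) (Fin.last (n + 1))) := by
  have hcol (i : Fin (n + 1)) : M i.castSucc (Fin.last (n + 1)) =
      (Pi.single (Fin.last n) (M (Fin.last n).castSucc (Fin.last (n + 1))) :
        Fin (n + 1) → α) i := by
    by_cases hi : i = Fin.last n
    · simp [hi]
    · rw [Pi.single_eq_of_ne hi]
      apply hT
      have := Fin.val_lt_last hi
      simp only [Fin.val_castSucc, Fin.val_last]
      rw [abs_of_neg (by omega)]
      omega
  ext i j
  induction i using Fin.lastCases <;> induction j using Fin.lastCases
  · simp
  · rw [borderLast_last_castSucc, ← hcol, hS.apply]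
  · rw [borderLast_castSucc_last]
    exact hcol _
  · simp

end Tridiagonal

theorem charmatrix_submatrix {R m n : Type*} [CommRing R] [Fintype m] [DecidableEq m]
    [Fintype n] [DecidableEq n] (M : Matrix n n R) {e : m → n} (he : Function.Injective e) :
    charmatrix (M.submatrix e e) = (charmatrix M).submatrix e e := by
  ext i j
  simp [charmatrix_apply, diagonal_apply, he.eq_iff]

section Charpoly

variable {R : Type*} [CommRing R] {n : ℕ}

theorem charmatrix_borderLast (A : Matrix (Fin n) (Fin n) R) (v : Fin n → R) (a : R) :
    charmatrix (borderLast A v a) = borderLast (charmatrix A) (fun i => -C (v i)) (X - C a) := by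
  ext i j
  induction i using Fin.lastCases <;> induction j using Fin.lastCases <;>
    simp [charmatrix_apply, diagonal_apply, Fin.castSucc_ne_last, (Fin.castSucc_ne_last _).symm]

theorem det_borderLast_single (A : Matrix (Fin (n + 1)) (Fin (n + 1)) R) (a b : R) :
    (borderLast A (Pi.single (Fin.last n) b) a).det =
      a * A.det - b * b * (A.submatrix Fin.castSucc Fin.castSucc).det := by
  have hminor : ((borderLast A (Pi.single (Fin.last n) b) a).submatrix Fin.castSucc
      (Fin.last n).castSucc.succAbove).det = b * (A.submatrix Fin.castSucc Fin.castSucc).det := by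
    rw [det_succ_column _ (Fin.last n), Fintype.sum_eq_single (Fin.last n)]
    · simp only [Fin.val_last, Even.add_self, Even.neg_pow, one_pow, one_mul, submatrix_apply,
        Fin.castSucc_ne_last, Fin.succAbove_ne_last_last, Fin.succAbove_last,
        borderLast_castSucc_last, Pi.single_eq_same, submatrix_submatrix, ne_eq, not_false_eq_true]
      congr 2
      ext i j
      simp [Fin.succAbove_of_castSucc_lt _ _
        (Fin.castSucc_lt_castSucc_iff.2 (Fin.castSucc_lt_last j))]
    · intro i hi
      simp [hi]
  rw [det_succ_row _ (Fin.last _), Fin.sum_univ_castSucc, Fintype.sum_eq_single (Fin.last n)]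
  · simp [Fin.succAbove_last, hminor]
    ring
  · intro j hj
    simp [hj]

theorem charpoly_borderLast_single (A : Matrix (Fin (n + 1)) (Fin (n + 1)) R) (a b : R) :
    (borderLast A (Pi.single (Fin.last n) b) a).charpoly =
      (X - C a) * A.charpoly - C (b * b) * (A.submatrix Fin.castSucc Fin.castSucc).charpoly := by
  have hv : (fun i => -C ((Pi.single (Fin.last n) b : Fin (n + 1) → R) i)) =
      (Pi.single (Fin.last n) (-C b) : Fin (n + 1) → R[X]) := by
    ext1 i
    by_cases hi : i = Fin.last n <;> simp [hi]
  rw [charpoly, charmatrix_borderLast, hv, det_borderLast_single, charpoly, charpoly,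
    charmatrix_submatrix _ (Fin.castSucc_injective _)]
  simp only [map_mul]
  ring

theorem charpoly_borderLast_single_div_modByMonic [Nontrivial R]
    (A : Matrix (Fin (n + 1)) (Fin (n + 1)) R) (a b : R) :
    (borderLast A (Pi.single (Fin.last n) b) a).charpoly /ₘ A.charpoly = X - C a ∧
      (borderLast A (Pi.single (Fin.last n) b) a).charpoly %ₘ A.charpoly =
        -(C (b * b) * (A.submatrix Fin.castSucc Fin.castSucc).charpoly) := by
  refine div_modByMonic_unique _ _ A.charpoly_monic ⟨?_, degree_lt_degree ?_⟩
  · rw [charpoly_borderLast_single]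
    ring
  · rw [natDegree_neg, charpoly_natDegree_eq_dim]
    exact (natDegree_C_mul_le _ _).trans_lt (by simp)

theorem eq_of_charpoly_borderLast_single_eq {R : Type*} [CommRing R] [LinearOrder R]
    [IsStrictOrderedRing R] {A B : Matrix (Fin (n + 1)) (Fin (n + 1)) R} {a a' b b' : R}
    (hb : 0 < b) (hb' : 0 < b')
    (h : (borderLast A (Pi.single (Fin.last n) b) a).charpoly =
      (borderLast B (Pi.single (Fin.last n) b') a').charpoly)
    (h' : A.charpoly = B.charpoly) :
    a = a' ∧ b = b' ∧ (A.submatrix Fin.castSucc Fin.castSucc).charpoly =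
      (B.submatrix Fin.castSucc Fin.castSucc).charpoly := by
  obtain ⟨hdA, hmA⟩ := charpoly_borderLast_single_div_modByMonic A a b
  obtain ⟨hdB, hmB⟩ := charpoly_borderLast_single_div_modByMonic B a' b'
  rw [h, h'] at hdA hmA
  have hbr := neg_inj.1 (hmA.symm.trans hmB)
  have hb2 : b * b = b' * b' := by
    simpa [(charpoly_monic _).leadingCoeff] using congrArg leadingCoeff hbr
  exact ⟨C_injective (sub_right_injective (hdA.symm.trans hdB)),
    (mul_self_inj hb.le hb'.le).1 hb2,
    mul_left_cancel₀ (C_ne_zero.2 (mul_pos hb' hb').ne') (hb2 ▸ hbr)⟩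

end Charpoly

def IsJacobi {n : ℕ} (J : Matrix (Fin (n + 1)) (Fin (n + 1)) ℝ) : Prop :=
  J.IsSymm ∧ J.IsTridiagonal ∧ ∀ k : Fin n, 0 < J k.castSucc k.succ

namespace IsJacobi

variable {n : ℕ}

theorem submatrix_castSucc {J : Matrix (Fin (n + 2)) (Fin (n + 2)) ℝ} (hJ : J.IsJacobi) :
    (J.submatrix Fin.castSucc Fin.castSucc).IsJacobi := by
  refine ⟨hJ.1.submatrix _, fun k l hkl => hJ.2.1 _ _ (by simpa using hkl), fun k => ?_⟩
  simpa using hJ.2.2 k.castSucc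

theorem borderLast_single {A : Matrix (Fin (n + 1)) (Fin (n + 1)) ℝ} (hA : A.IsJacobi) {b : ℝ}
    (hb : 0 < b) (a : ℝ) : (A.borderLast (Pi.single (Fin.last n) b) a).IsJacobi := by
  refine ⟨hA.1.borderLast _ _, hA.2.1.borderLast_single _ _, fun k => ?_⟩
  induction k using Fin.lastCases
  · simpa using hb
  · rw [Fin.succ_castSucc, borderLast_castSucc_castSucc]
    exact hA.2.2 _

theorem eq_of_charpoly_eq {J K : Matrix (Fin (n + 1)) (Fin (n + 1)) ℝ} (hJ : J.IsJacobi)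
    (hK : K.IsJacobi) (h : J.charpoly = K.charpoly)
    (h' : (J.submatrix Fin.castSucc Fin.castSucc).charpoly =
      (K.submatrix Fin.castSucc Fin.castSucc).charpoly) : J = K := by
  induction n with
  | zero =>
    have htr : J.trace = K.trace := by
      rw [trace_eq_neg_charpoly_coeff, trace_eq_neg_charpoly_coeff, h]
    ext i j
    fin_cases i; fin_cases j
    simpa [trace_fin_one] using htr
  | succ n ih =>
    have eJ := hJ.2.1.eq_borderLast hJ.1
    have eK := hK.2.1.eq_borderLast hK.1
    rw [eJ, eK] at h
    obtain ⟨ha, hb, hr⟩ := eq_of_charpoly_borderLast_single_eq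
      (by simpa using hJ.2.2 (Fin.last n)) (by simpa using hK.2.2 (Fin.last n)) h h'
    rw [eJ, eK, ih hJ.submatrix_castSucc hK.submatrix_castSucc h' hr, ha, hb]

end IsJacobi

theorem exists_isJacobi_charpoly {n : ℕ} {ω : Fin (n + 1) → ℝ} {μ : Fin n → ℝ}
    (h : Interlaces ω μ) :
    ∃ J : Matrix (Fin (n + 1)) (Fin (n + 1)) ℝ, J.IsJacobi ∧
      J.charpoly = ∏ i, (X - C (ω i)) ∧
      (J.submatrix Fin.castSucc Fin.castSucc).charpoly = ∏ i, (X - C (μ i)) := by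
  induction n with
  | zero =>
    refine ⟨of fun _ _ => ω 0, ⟨IsSymm.ext fun _ _ => rfl, ?_, finZeroElim⟩, ?_, by simp⟩
    · intro k l hkl
      fin_cases k; fin_cases l
      simp at hkl
    · simp [charpoly, det_unique, charmatrix_apply_eq]
  | succ m ih =>
    have hωm : (∏ i, (X - C (ω i))).Monic := monic_prod_of_monic _ _ fun i _ => monic_X_sub_C _
    have hμm : (∏ i, (X - C (μ i))).Monic := monic_prod_of_monic _ _ fun i _ => monic_X_sub_C _
    obtain ⟨a, s, hps, hs⟩ := exists_X_sub_C_mul_sub hωm hμm (by simp)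
    have hsdeg : s.natDegree ≤ m := by
      rw [degree_eq_natDegree hμm.ne_zero, natDegree_finsetProd_X_sub_C_eq_card,
        Finset.card_univ, Fintype.card_fin] at hs
      exact natDegree_le_iff_degree_le.2 (Order.le_of_lt_succ hs)
    have heval (i : Fin (m + 1)) : s.eval (μ i) = -∏ j, (μ i - ω j) := by
      have hμi : (∏ j, (X - C (μ j))).eval (μ i) = 0 := by
        simp [eval_prod, Finset.prod_eq_zero (Finset.mem_univ i)]
      have := congrArg (eval (μ i)) hps
      rw [eval_sub, eval_mul, hμi, mul_zero, zero_sub, eval_prod] at this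
      simp only [eval_sub, eval_X, eval_C] at this
      linear_combination this
    obtain ⟨c, hc, ν, hν, hsν⟩ := exists_interlaces_eq_C_mul_prod_of_eval_alternating
      h.strictMono_right.monotone hsdeg
      (fun i => by simpa [heval] using h.prod_castSucc_sub_mul_prod_succ_sub_neg i)
      (by simpa [heval] using h.prod_last_sub_neg)
    obtain ⟨J', hJ', hJ'ω, hJ'μ⟩ := ih hν
    refine ⟨J'.borderLast (Pi.single (Fin.last m) √c) a,
      hJ'.borderLast_single (Real.sqrt_pos.2 hc) a, ?_, by rw [submatrix_borderLast, hJ'ω]⟩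
    rw [charpoly_borderLast_single, hJ'ω, hJ'μ, Real.mul_self_sqrt hc.le, ← hsν, hps]

end Matrix

/-- Inverse eigenvalue theorem for Jacobi matrices: given strictly interlacing data
`ω₁ < μ₁ < ω₂ < ⋯ < μ_{n-1} < ω_n`, there is a unique real symmetric tridiagonal
matrix with positive off-diagonal entries whose spectrum is the `ω`'s and whose
trailing principal submatrix has spectrum the `μ`'s. -/
theorem jacobi_inverse_eigenvalue_problem
    (n : ℕ) (ω : Fin (n + 1) → ℝ) (μ : Fin n → ℝ)
    (hinter : ∀ i : Fin n, ω i.castSucc < μ i ∧ μ i < ω i.succ) :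
    ∃! J : Matrix (Fin (n + 1)) (Fin (n + 1)) ℝ,
      J.IsSymm ∧
      (∀ k l : Fin (n + 1), 1 < |(k : ℤ) - (l : ℤ)| → J k l = 0) ∧
      (∀ k : Fin n, 0 < J k.castSucc k.succ) ∧
      J.charpoly = ∏ i, (X - C (ω i)) ∧
      (J.submatrix Fin.castSucc Fin.castSucc).charpoly = ∏ i, (X - C (μ i)) := by
  obtain ⟨J, hJ, hω, hμ⟩ := exists_isJacobi_charpoly hinter
  refine ⟨J, ⟨hJ.1, hJ.2.1, hJ.2.2, hω, hμ⟩, ?_⟩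
  rintro K ⟨hsymm, htri, hpos, hKω, hKμ⟩
  exact IsJacobi.eq_of_charpoly_eq ⟨hsymm, htri, hpos⟩ hJ (hKω.trans hω.symm) (hKμ.trans hμ.symm)
end

section
/- Let A be a real symmetric matrix whose graph is a tree T on n vertices. Then the number of distinct eigenvalues of A is at least d(T), the diameter of T measured as the number of vertices on a longest path in T. -/
/-!
Let `p` be a path of length `k` from `u` to `w` in the tree. Since `A` is supported on the
tree and a path in a tree is a shortest walk between its endpoints, `(A ^ i) u w` vanishes
for `i < k` while `(A ^ k) u w` is the (nonzero) product of the entries of `A` along `p`. Hence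
`A ^ k` is not a linear combination of lower powers, so the minimal polynomial of `A` has degree
greater than `k`. For a symmetric matrix the minimal polynomial divides `∏ (X - λ)` over the
distinct eigenvalues `λ`, so there are more than `k` of them.
-/

open Polynomial SimpleGraph

theorem lt_natDegree_minpoly_of_map_pow {K A M : Type*} [Field K] [Ring A] [Algebra K A]
    [AddCommMonoid M] [Module K M] {x : A} (hx : IsIntegral K x) (φ : A →ₗ[K] M) {k : ℕ}
    (hlt : ∀ i < k, φ (x ^ i) = 0) (hk : φ (x ^ k) ≠ 0) :
    k < (minpoly K x).natDegree := by
  have : Nontrivial A := nontrivial_of_ne (x ^ k) 0 fun h ↦ hk (by rw [h, map_zero])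
  by_contra! hdeg
  have hmod : (X ^ k %ₘ minpoly K x).natDegree < (minpoly K x).natDegree :=
    natDegree_modByMonic_lt _ (minpoly.monic hx) (minpoly.ne_one K x)
  refine hk ?_
  rw [← aeval_X_pow (R := K), ← minpoly.aeval_modByMonic_minpoly, aeval_eq_sum_range, map_sum]
  refine Finset.sum_eq_zero fun i hi ↦ ?_
  rw [map_smul, hlt i (by grind), smul_zero]

theorem Matrix.IsHermitian.natDegree_minpoly_le_card_eigenvalues {𝕜 n : Type*} [RCLike 𝕜]
    [Fintype n] [DecidableEq n] {A : Matrix n n 𝕜} (hA : A.IsHermitian) :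
    (minpoly ℝ A).natDegree ≤ (Finset.univ.image hA.eigenvalues).card := by
  set q : ℝ[X] := ∏ μ ∈ Finset.univ.image hA.eigenvalues, (X - C μ)
  have hq : aeval A q = 0 := by
    rw [← cfc_polynomial q A, cfc_congr (g := 0), cfc_zero]
    rw [hA.spectrum_real_eq_range_eigenvalues]
    rintro _ ⟨i, rfl⟩
    simp [q, eval_prod, Finset.prod_eq_zero_iff, sub_eq_zero]
  calc (minpoly ℝ A).natDegree ≤ q.natDegree :=
        natDegree_le_of_dvd (minpoly.dvd ℝ A hq) (monic_prod_X_sub_C id _).ne_zero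
    _ = _ := natDegree_finsetProd_X_sub_C_eq_card _ id

theorem SimpleGraph.IsAcyclic.length_le_of_isPath {V : Type*} {G : SimpleGraph V}
    (hG : G.IsAcyclic) {u v : V} {p : G.Walk u v} (hp : p.IsPath) (q : G.Walk u v) :
    p.length ≤ q.length := by
  classical
  have : (⟨p, hp⟩ : G.Path u v) = ⟨q.bypass, q.bypass_isPath⟩ :=
    (hG.subsingleton_path u v).elim _ _
  calc p.length = q.bypass.length := congrArg (fun P : G.Path u v ↦ P.1.length) this
    _ ≤ q.length := q.length_bypass_le_length

namespace Matrix

variable {V R : Type*} [Fintype V] [DecidableEq V] [Semiring R] {G : SimpleGraph V}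
  {A : Matrix V V R}

theorem exists_walk_of_pow_apply_ne_zero (hA : ∀ i j, i ≠ j → A i j ≠ 0 → G.Adj i j)
    {k : ℕ} {u w : V} (h : (A ^ k) u w ≠ 0) : ∃ p : G.Walk u w, p.length ≤ k := by
  induction k generalizing w with
  | zero =>
    obtain rfl : u = w := by_contra fun huw ↦ h (by rw [pow_zero, one_apply_ne huw])
    exact ⟨.nil, le_rfl⟩
  | succ k ih =>
    rw [pow_succ, mul_apply] at h
    obtain ⟨x, -, hx⟩ := Finset.exists_ne_zero_of_sum_ne_zero h
    obtain ⟨p, hp⟩ := ih (left_ne_zero_of_mul hx)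
    by_cases hxw : x = w
    · subst hxw
      exact ⟨p, by omega⟩
    · exact ⟨p.concat (hA x w hxw (right_ne_zero_of_mul hx)), by simp; omega⟩

theorem pow_apply_eq_zero_of_lt_length (hG : G.IsAcyclic)
    (hA : ∀ i j, i ≠ j → A i j ≠ 0 → G.Adj i j) {u w : V} {p : G.Walk u w} (hp : p.IsPath)
    {k : ℕ} (hk : k < p.length) : (A ^ k) u w = 0 := by
  by_contra h
  obtain ⟨q, hq⟩ := exists_walk_of_pow_apply_ne_zero hA h
  have := hG.length_le_of_isPath hp q
  omega

theorem pow_length_apply_ne_zero_of_isPath [NoZeroDivisors R] [Nontrivial R]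
    (hG : G.IsAcyclic) (hA : ∀ i j, i ≠ j → (A i j ≠ 0 ↔ G.Adj i j)) {u w : V}
    {p : G.Walk u w} (hp : p.IsPath) : (A ^ p.length) u w ≠ 0 := by
  have hsupp : ∀ i j, i ≠ j → A i j ≠ 0 → G.Adj i j := fun i j hij ↦ (hA i j hij).1
  induction p with
  | nil => simp
  | @cons u v w huv q ih =>
    rw [Walk.length_cons, pow_succ', mul_apply, Finset.sum_eq_single v]
    · exact mul_ne_zero ((hA u v huv.ne).2 huv) (ih (Walk.cons_isPath_iff _ _ |>.1 hp).1)
    · intro x _ hxv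
      rcases eq_or_ne u x with rfl | hux
      · rw [pow_apply_eq_zero_of_lt_length hG hsupp hp (by simp), mul_zero]
      by_cases hx : A u x = 0
      · rw [hx, zero_mul]
      have hadj : G.Adj u x := (hA u x hux).1 hx
      -- `x` is off the path, so `x`, `u`, then the path is a path to `w` of length `k + 2`
      have hxp : x ∉ (Walk.cons huv q).support := fun hmem ↦
        hxv (by simpa using hG.eq_snd_of_adj_start hp hadj hmem)
      rw [pow_apply_eq_zero_of_lt_length hG hsupp (hp.cons hxp) (p := .cons hadj.symm _)
        (by simp), mul_zero]
    · simp

end Matrix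

/-- The number of distinct eigenvalues of a real symmetric matrix whose graph is a
tree `T` is at least the number of vertices on any path in `T` (hence at least the
diameter of `T` measured in vertices). -/
theorem distinct_eigenvalues_ge_diameter
    (n : ℕ) (T : SimpleGraph (Fin n)) (hT : T.IsTree)
    (A : Matrix (Fin n) (Fin n) ℝ) (hA : A.IsHermitian)
    (hgraph : ∀ i j : Fin n, i ≠ j → (A i j ≠ 0 ↔ T.Adj i j)) :
    ∀ (u w : Fin n) (p : T.Walk u w), p.IsPath →
      p.length + 1 ≤ (Finset.univ.image hA.eigenvalues).card := by
  intro u w p hp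
  have hlt : p.length < (minpoly ℝ A).natDegree :=
    lt_natDegree_minpoly_of_map_pow (Algebra.IsIntegral.isIntegral A)
      (Matrix.entryLinearMap ℝ ℝ u w)
      (fun _ hi ↦ Matrix.pow_apply_eq_zero_of_lt_length hT.isAcyclic
        (fun i j hij ↦ (hgraph i j hij).1) hp hi)
      (Matrix.pow_length_apply_ne_zero_of_isPath hT.isAcyclic hgraph hp)
  exact hlt.trans_le hA.natDegree_minpoly_le_card_eigenvalues
end

section
/- Let A be a real symmetric matrix whose graph is a tree T, and let λ be an eigenvalue of A with m_A(λ) ≥ 2. Then there exists a vertex u of T with deg_T(u) ≥ 3 such that m_{A(u)}(λ) = m_A(λ) + 1, and at least three components T₁, T₂, T₃ of T − u satisfy m_{A[T_i]}(λ) ≥ 1. -/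
open Polynomial
open scoped Classical

/-- The characteristic polynomial of the principal submatrix of `A` indexed by `S`. -/
noncomputable def charpolyOn {n : ℕ} (A : Matrix (Fin n) (Fin n) ℝ)
    (S : Finset (Fin n)) : Polynomial ℝ :=
  (A.submatrix (fun x : {a // a ∈ S} => (x : Fin n))
    (fun x : {a // a ∈ S} => (x : Fin n))).charpoly

/-- The component of `G - v` containing `u`: all vertices reachable from `u`
by a walk avoiding `v`. -/
noncomputable def branchAt {n : ℕ} (G : SimpleGraph (Fin n)) (v u : Fin n) :
    Finset (Fin n) :=
  Finset.univ.filter (fun w => ∃ p : G.Walk u w, v ∉ p.support)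

/-!
Write `m(S)` for the multiplicity of `λ` as an eigenvalue of the principal submatrix `A[S]`.
Since `A[S]` is diagonalizable, `m(S)` is the dimension of the space of vectors supported on `S`
that satisfy the eigenvalue equation at every vertex of `S`. Hence deleting a vertex changes `m`
by at most one, and `m` is additive over the components of an induced subforest.

Call `v ∈ S` Parter if `m(S - v) = m(S) + 1`. If `m(S) ≥ 2`, some eigenvector of `A[S]` vanishes
at a vertex `v` but not at a neighbour `w`. Restricted to the branch at `v` containing `w`, it is
an eigenvector `y` of `A[S - v]` with `(A y)_v ≠ 0`, and pairing `y` with the eigenvectors of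
`A[S]` by symmetry shows that `v` is Parter.

The theorem is proved for every subtree `S` by induction on `|S|`. The branches at a Parter
vertex `v` carry total multiplicity `m(S) + 1 ≥ 3`, so either three of them carry `λ` or one of
them, `C`, has `m(C) ≥ 2`. In the latter case induction gives a Parter vertex `u` of `C` at which
three branches of `C - u` carry `λ`, and computing `m(S - u - v)` in two ways shows that `u` is
Parter in `S`. The branches of `C - u` away from `v` are branches of `S - u`, and the branch of
`S - u` through `v` carries `λ` unless `m(C) = m(S) + 1`. In that case `u` has two branches
carrying `λ`, so a second descent from `u` enters a branch with `m ≤ m(S)`, where the exceptional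
case cannot occur.
-/

open Matrix Module

theorem Matrix.IsHermitian.finrank_eigenspace_toLin' {ι : Type*} [Fintype ι] [DecidableEq ι]
    {M : Matrix ι ι ℝ} (hM : M.IsHermitian) (lam : ℝ) :
    finrank ℝ (End.eigenspace (toLin' M) lam) = M.charpoly.rootMultiplicity lam := by
  have hss : End.IsSemisimple (toLin' M) := by
    rw [LinearEquiv.isSemisimple_iff (toLin' M) (toEuclideanLin M)
      (WithLp.linearEquiv 2 ℝ (ι → ℝ)).symm rfl]
    exact End.isFinitelySemisimple_iff_isSemisimple.mp
      (isSymmetric_toEuclideanLin_iff.mpr hM).isFinitelySemisimple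
  rw [← charpoly_toLin', ← LinearMap.finrank_maxGenEigenspace_eq,
    hss.isFinitelySemisimple.maxGenEigenspace_eq_eigenspace]

theorem Matrix.submatrix_mulVec_embedding {R k l m n : Type*} [NonUnitalNonAssocSemiring R]
    [Fintype l] [Fintype n] (A : Matrix m n R) (g : k → m) (f : l ↪ n) {x : n → R}
    (hx : ∀ i ∉ Set.range f, x i = 0) : A.submatrix g f *ᵥ (x ∘ f) = (A *ᵥ x) ∘ g :=
  funext fun _ => Fintype.sum_of_injective f f.injective _ _ (fun i hi => by simp [hx i hi])
    (fun _ => rfl)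

theorem Matrix.IsSymm.mulVec_dotProduct {R n : Type*} [CommSemiring R] [Fintype n]
    {A : Matrix n n R} (hA : A.IsSymm) (x y : n → R) : (A *ᵥ x) ⬝ᵥ y = x ⬝ᵥ (A *ᵥ y) := by
  rw [dotProduct_mulVec, ← mulVec_transpose, hA]

theorem Function.ExtendByZero.linearMap_injective (R : Type*) [Semiring R] {ι η : Type*}
    {s : ι → η} (hs : Function.Injective s) :
    Function.Injective (Function.ExtendByZero.linearMap R s) := fun y z h =>
  funext fun k => by simpa [hs.extend_apply] using congrFun h (s k)

section Codimension

variable {K M : Type*} [Field K] [AddCommGroup M] [Module K M] [FiniteDimensional K M]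

theorem Submodule.finrank_inf_ker_add_finrank_range (E : Submodule K M) (f : M →ₗ[K] K) :
    finrank K (E ⊓ LinearMap.ker f : Submodule K M) +
      finrank K (LinearMap.range (f.domRestrict E)) = finrank K E := by
  rw [← (f.domRestrict E).finrank_range_add_finrank_ker, add_comm, LinearMap.ker_domRestrict,
    ← Submodule.finrank_map_subtype_eq, Submodule.map_comap_subtype]

theorem Submodule.finrank_le_finrank_inf_ker_add_one (E : Submodule K M) (f : M →ₗ[K] K) :
    finrank K E ≤ finrank K (E ⊓ LinearMap.ker f : Submodule K M) + 1 := by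
  rw [← E.finrank_inf_ker_add_finrank_range f]
  have := (LinearMap.range (f.domRestrict E)).finrank_le
  rw [finrank_self] at this
  omega

theorem Submodule.finrank_inf_ker_add_one {E : Submodule K M} (f : M →ₗ[K] K) {y : M}
    (hy : y ∈ E) (hfy : f y ≠ 0) :
    finrank K (E ⊓ LinearMap.ker f : Submodule K M) + 1 = finrank K E := by
  have hf : f.domRestrict E ≠ 0 := fun h => hfy (LinearMap.congr_fun h ⟨y, hy⟩)
  rw [← E.finrank_inf_ker_add_finrank_range f, Module.Dual.range_eq_top_of_ne_zero hf,
    finrank_top, finrank_self]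

end Codimension

namespace SimpleGraph

variable {V : Type*} (G : SimpleGraph V)

def ReachableIn (U : Finset V) (a b : V) : Prop :=
  ∃ p : G.Walk a b, ∀ x ∈ p.support, x ∈ U

/-- The component of `a` in the subgraph induced on `U`; it is empty when `a ∉ U`. -/
noncomputable def componentIn (U : Finset V) (a : V) : Finset V :=
  U.filter (G.ReachableIn U a)

def IsConnectedIn (U : Finset V) : Prop :=
  ∀ a ∈ U, ∀ b ∈ U, G.ReachableIn U a b

variable {G} {U U' K S C : Finset V} {a b c u v x : V}

namespace ReachableIn

theorem mem_left (h : G.ReachableIn U a b) : a ∈ U :=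
  h.elim fun p hp => hp a p.start_mem_support

theorem mem_right (h : G.ReachableIn U a b) : b ∈ U :=
  h.elim fun p hp => hp b p.end_mem_support

theorem refl (ha : a ∈ U) : G.ReachableIn U a a :=
  ⟨.nil, by simpa using ha⟩

theorem symm (h : G.ReachableIn U a b) : G.ReachableIn U b a :=
  h.elim fun p hp => ⟨p.reverse, by simpa using hp⟩

theorem trans (h₁ : G.ReachableIn U a b) (h₂ : G.ReachableIn U b c) : G.ReachableIn U a c :=
  h₁.elim fun p hp => h₂.elim fun q hq =>
    ⟨p.append q, fun x hx => (p.mem_support_append_iff q).mp hx |>.elim (hp x) (hq x)⟩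

theorem mono (h : G.ReachableIn U a b) (hUU' : U ⊆ U') : G.ReachableIn U' a b :=
  h.elim fun p hp => ⟨p, fun x hx => hUU' (hp x hx)⟩

theorem of_adj (hadj : G.Adj a b) (ha : a ∈ U) (hb : b ∈ U) : G.ReachableIn U a b :=
  ⟨hadj.toWalk, by simp [ha, hb]⟩

end ReachableIn

theorem mem_componentIn : b ∈ G.componentIn U a ↔ G.ReachableIn U a b := by
  simp only [componentIn, Finset.mem_filter, and_iff_right_iff_imp]
  exact ReachableIn.mem_right

theorem componentIn_subset : G.componentIn U a ⊆ U := Finset.filter_subset _ _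

theorem self_mem_componentIn (ha : a ∈ U) : a ∈ G.componentIn U a :=
  mem_componentIn.mpr (.refl ha)

theorem componentIn_eq_of_mem (h : b ∈ G.componentIn U a) :
    G.componentIn U b = G.componentIn U a := by
  have hab := mem_componentIn.mp h
  ext c
  simp only [mem_componentIn]
  exact ⟨hab.trans, hab.symm.trans⟩

theorem mem_componentIn_of_adj (hb : b ∈ G.componentIn U a) (hc : c ∈ U) (hadj : G.Adj b c) :
    c ∈ G.componentIn U a :=
  mem_componentIn.mpr ((mem_componentIn.mp hb).trans (.of_adj hadj (componentIn_subset hb) hc))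

theorem isConnectedIn_componentIn : G.IsConnectedIn (G.componentIn U a) := by
  have key : ∀ b ∈ G.componentIn U a, G.ReachableIn (G.componentIn U a) a b := by
    intro b hb
    obtain ⟨p, hp⟩ := mem_componentIn.mp hb
    refine ⟨p, fun x hx => mem_componentIn.mpr ⟨p.takeUntil x hx, fun y hy => hp y ?_⟩⟩
    exact p.support_takeUntil_subset_support hx hy
  exact fun b hb c hc => (key b hb).symm.trans (key c hc)

theorem subset_componentIn (hK : G.IsConnectedIn K) (hKU : K ⊆ U) (hb : b ∈ K)
    (hba : b ∈ G.componentIn U a) : K ⊆ G.componentIn U a := fun c hc =>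
  mem_componentIn.mpr ((mem_componentIn.mp hba).trans ((hK b hb c hc).mono hKU))

theorem ReachableIn.exists_adj_of_notMem_componentIn (h : G.ReachableIn U a b) (ha : a ∈ U')
    (hb : b ∉ G.componentIn U' a) :
    ∃ i ∈ G.componentIn U' a, ∃ j ∈ U, j ∉ U' ∧ G.Adj i j := by
  obtain ⟨p, hp⟩ := h
  obtain ⟨d, hd, hd₁, hd₂⟩ := p.exists_boundary_dart _ (self_mem_componentIn ha) hb
  exact ⟨d.fst, hd₁, d.snd, hp _ (p.dart_snd_mem_support_of_mem_darts hd),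
    fun h => hd₂ (mem_componentIn_of_adj hd₁ h d.adj), d.adj⟩

theorem componentIn_eq_of_forall_not_adj (hU' : U' ⊆ U) (ha : a ∈ U')
    (hclosed : ∀ i ∈ G.componentIn U' a, ∀ j ∈ U, j ∉ U' → ¬ G.Adj i j) :
    G.componentIn U a = G.componentIn U' a := by
  refine Finset.Subset.antisymm (fun b hb => ?_) (subset_componentIn isConnectedIn_componentIn
    (componentIn_subset.trans hU') (self_mem_componentIn ha) (self_mem_componentIn (hU' ha)))
  by_contra hb'
  obtain ⟨i, hi, j, hjU, hjU', hij⟩ :=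
    (mem_componentIn.mp hb).exists_adj_of_notMem_componentIn ha hb'
  exact hclosed i hi j hjU hjU' hij

theorem IsAcyclic.eq_of_adj_of_mem_componentIn (hG : G.IsAcyclic) {v w j : V} (hvU : v ∉ U)
    (hw : G.Adj v w) (hj : G.Adj v j) (hjw : j ∈ G.componentIn U w) : j = w := by
  obtain ⟨q, hq⟩ := mem_componentIn.mp hjw
  have hedge := isBridge_iff_forall_walk_mem_edges.mp
    (isAcyclic_iff_forall_adj_isBridge.mp hG hw) (.cons hj q.reverse)
  rw [Walk.edges_cons, List.mem_cons, Sym2.eq_iff] at hedge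
  rcases hedge with (⟨-, h⟩ | ⟨h, -⟩) | h
  · exact h.symm
  · exact (hj.ne h).elim
  · exact absurd (hq v (by simpa using q.reverse.fst_mem_support_of_mem_edges h)) hvU

variable [DecidableEq V]

noncomputable def componentsIn (G : SimpleGraph V) (U : Finset V) : Finset (Finset V) :=
  U.image (G.componentIn U)

theorem mem_componentsIn : K ∈ G.componentsIn U ↔ ∃ a ∈ U, G.componentIn U a = K :=
  Finset.mem_image

theorem componentIn_mem_componentsIn (ha : a ∈ U) : G.componentIn U a ∈ G.componentsIn U :=
  mem_componentsIn.mpr ⟨a, ha, rfl⟩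

theorem componentIn_eq_of_mem_componentsIn (hK : K ∈ G.componentsIn U) (hb : b ∈ K) :
    G.componentIn U b = K := by
  obtain ⟨a, -, rfl⟩ := mem_componentsIn.mp hK
  exact componentIn_eq_of_mem hb

theorem subset_of_mem_componentsIn (hK : K ∈ G.componentsIn U) : K ⊆ U := by
  obtain ⟨a, -, rfl⟩ := mem_componentsIn.mp hK
  exact componentIn_subset

theorem disjoint_of_mem_componentsIn {K L : Finset V} (hK : K ∈ G.componentsIn U)
    (hL : L ∈ G.componentsIn U) (hKL : K ≠ L) : Disjoint K L :=
  Finset.disjoint_left.mpr fun _ hbK hbL =>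
    hKL ((componentIn_eq_of_mem_componentsIn hK hbK).symm.trans
      (componentIn_eq_of_mem_componentsIn hL hbL))

theorem biUnion_componentsIn : (G.componentsIn U).biUnion id = U := by
  ext b
  simp only [Finset.mem_biUnion, id]
  exact ⟨fun ⟨K, hK, hbK⟩ => subset_of_mem_componentsIn hK hbK,
    fun hb => ⟨_, componentIn_mem_componentsIn hb, self_mem_componentIn hb⟩⟩

theorem IsConnectedIn.exists_adj_mem_componentIn_erase (hS : G.IsConnectedIn S) (hv : v ∈ S)
    (hx : x ∈ S.erase v) : ∃ w, G.Adj v w ∧ x ∈ G.componentIn (S.erase v) w := by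
  obtain ⟨w, hw, j, hjS, hj, hwj⟩ :=
    (hS x (Finset.mem_of_mem_erase hx) v hv).exists_adj_of_notMem_componentIn hx
      (fun h => Finset.notMem_erase v S (componentIn_subset h))
  obtain rfl : j = v := by simpa [hjS] using hj
  exact ⟨w, hwj.symm, componentIn_eq_of_mem hw ▸ self_mem_componentIn hx⟩

theorem IsConnectedIn.card_componentsIn_erase_le_degree (hS : G.IsConnectedIn S) (hv : v ∈ S)
    [Fintype (G.neighborSet v)] : (G.componentsIn (S.erase v)).card ≤ G.degree v := by
  rw [← card_neighborFinset_eq_degree]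
  refine (Finset.card_le_card fun K hK => ?_).trans
    (Finset.card_image_le (s := G.neighborFinset v) (f := G.componentIn (S.erase v)))
  obtain ⟨x, hx, rfl⟩ := mem_componentsIn.mp hK
  obtain ⟨w, hvw, hxw⟩ := hS.exists_adj_mem_componentIn_erase hv hx
  exact Finset.mem_image.mpr
    ⟨w, (mem_neighborFinset G v w).mpr hvw, (componentIn_eq_of_mem hxw).symm⟩

theorem IsConnectedIn.sdiff_subset_componentIn_erase (hS : G.IsConnectedIn S) (hv : v ∈ S)
    (hC : C ∈ G.componentsIn (S.erase v)) (hu : u ∈ C) :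
    S.erase v \ C ⊆ G.componentIn (S.erase u) v := by
  intro y hy
  obtain ⟨hySv, hyC⟩ := Finset.mem_sdiff.mp hy
  obtain ⟨w, hvw, hyw⟩ := hS.exists_adj_mem_componentIn_erase hv hySv
  have hwSv := (mem_componentIn.mp hyw).mem_left
  have huK : u ∉ G.componentIn (S.erase v) w := fun h => hyC <| by
    rw [← componentIn_eq_of_mem_componentsIn hC hu, componentIn_eq_of_mem h]
    exact hyw
  have hKSu : G.componentIn (S.erase v) w ⊆ S.erase u := fun z hz =>
    Finset.mem_erase.mpr ⟨fun h => huK (h ▸ hz), Finset.mem_of_mem_erase (componentIn_subset hz)⟩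
  have hvSu : v ∈ S.erase u := Finset.mem_erase.mpr
    ⟨fun h => Finset.notMem_erase v S (subset_of_mem_componentsIn hC (h ▸ hu)), hv⟩
  exact subset_componentIn isConnectedIn_componentIn hKSu (self_mem_componentIn hwSv)
    (mem_componentIn_of_adj (self_mem_componentIn hvSu) (hKSu (self_mem_componentIn hwSv)) hvw)
    hyw

theorem IsAcyclic.componentIn_erase_eq_of_notMem (hG : G.IsAcyclic)
    (hC : C ∈ G.componentsIn (S.erase v)) (hbC : b ∈ C) (hvb : G.Adj v b) (hx : x ∈ C.erase u)
    (hbx : b ∉ G.componentIn (C.erase u) x) :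
    G.componentIn (S.erase u) x = G.componentIn (C.erase u) x := by
  refine componentIn_eq_of_forall_not_adj (Finset.erase_subset_erase u
    ((subset_of_mem_componentsIn hC).trans (Finset.erase_subset v S))) hx
    fun i hi j hj hjC hij => ?_
  have hiC : i ∈ C := Finset.mem_of_mem_erase (componentIn_subset hi)
  have hjC' : j ∉ C := fun h => hjC (Finset.mem_erase.mpr ⟨Finset.ne_of_mem_erase hj, h⟩)
  rw [← componentIn_eq_of_mem_componentsIn hC hbC] at hiC hjC'
  by_cases hjv : j = v
  · subst hjv
    exact hbx (hG.eq_of_adj_of_mem_componentIn (Finset.notMem_erase j S) hvb hij.symm hiC ▸ hi)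
  · exact hjC' (mem_componentIn_of_adj hiC
      (Finset.mem_erase.mpr ⟨hjv, Finset.mem_of_mem_erase hj⟩) hij)

theorem IsAcyclic.erase_componentIn_erase_eq (hG : G.IsAcyclic) (hS : G.IsConnectedIn S)
    (hv : v ∈ S) (hC : C ∈ G.componentsIn (S.erase v)) (hbC : b ∈ C) (hvb : G.Adj v b)
    (hu : u ∈ C) :
    (G.componentIn (S.erase u) v).erase v = G.componentIn (C.erase u) b ∪ (S.erase v \ C) := by
  have hCSu : C.erase u ⊆ S.erase u :=
    Finset.erase_subset_erase u ((subset_of_mem_componentsIn hC).trans (Finset.erase_subset v S))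
  have hvC : v ∉ C := fun h => Finset.notMem_erase v S (subset_of_mem_componentsIn hC h)
  have hvSu : v ∈ S.erase u := Finset.mem_erase.mpr ⟨fun h => hvC (h ▸ hu), hv⟩
  have hvD := self_mem_componentIn (G := G) hvSu
  refine Finset.Subset.antisymm (fun y hy => ?_) (Finset.union_subset (fun y hy => ?_)
    ((Finset.subset_erase.mpr ⟨hS.sdiff_subset_componentIn_erase hv hC hu,
      fun h => (Finset.mem_sdiff.mp h).1 |> Finset.notMem_erase v S⟩)))
  · obtain ⟨hyv, hyD⟩ := Finset.mem_erase.mp hy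
    have hySu := componentIn_subset hyD
    by_cases hyC : y ∈ C
    · have hyCu : y ∈ C.erase u := Finset.mem_erase.mpr ⟨Finset.ne_of_mem_erase hySu, hyC⟩
      by_cases hbK : b ∈ G.componentIn (C.erase u) y
      · exact Finset.mem_union_left _ (componentIn_eq_of_mem hbK ▸ self_mem_componentIn hyCu)
      · have hK := hG.componentIn_erase_eq_of_notMem hC hbC hvb hyCu hbK
        rw [componentIn_eq_of_mem hyD] at hK
        exact (hvC (Finset.mem_of_mem_erase (componentIn_subset (hK ▸ hvD)))).elim
    · exact Finset.mem_union_right _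
        (Finset.mem_sdiff.mpr ⟨Finset.mem_erase.mpr ⟨hyv, Finset.mem_of_mem_erase hySu⟩, hyC⟩)
  · have hbCu := (mem_componentIn.mp hy).mem_left
    refine Finset.mem_erase.mpr ⟨fun h => hvC (h ▸ Finset.mem_of_mem_erase (componentIn_subset hy)),
      subset_componentIn isConnectedIn_componentIn (componentIn_subset.trans hCSu)
        (self_mem_componentIn hbCu) (mem_componentIn_of_adj hvD (hCSu hbCu) hvb) hy⟩

end SimpleGraph

namespace ParterWiener

open SimpleGraph

variable {V : Type*}

section LocalEigenspaces

variable [Fintype V]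

/-- The `λ`-eigenspace of the principal submatrix `A[S]`, extended by zero to all of `V`;
its dimension `multOn A lam S` is the multiplicity `m_{A[S]}(λ)`. -/
def eigenspaceOn (A : Matrix V V ℝ) (lam : ℝ) (S : Finset V) : Submodule ℝ (V → ℝ) where
  carrier := {x | (∀ i ∉ S, x i = 0) ∧ ∀ i ∈ S, (A *ᵥ x) i = lam * x i}
  add_mem' {x y} hx hy :=
    ⟨fun i hi => by simp [hx.1 i hi, hy.1 i hi],
      fun i hi => by simp [mulVec_add, hx.2 i hi, hy.2 i hi, mul_add]⟩
  zero_mem' := ⟨fun _ _ => rfl, fun _ _ => by simp⟩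
  smul_mem' c x hx :=
    ⟨fun i hi => by simp [hx.1 i hi], fun i hi => by simp [mulVec_smul, hx.2 i hi, mul_left_comm]⟩

noncomputable def multOn (A : Matrix V V ℝ) (lam : ℝ) (S : Finset V) : ℕ :=
  finrank ℝ (eigenspaceOn A lam S)

variable {A : Matrix V V ℝ} {lam : ℝ} {S : Finset V}

theorem mem_eigenspaceOn {x : V → ℝ} :
    x ∈ eigenspaceOn A lam S ↔ (∀ i ∉ S, x i = 0) ∧ ∀ i ∈ S, (A *ᵥ x) i = lam * x i :=
  Iff.rfl

theorem eigenspaceOn_map_eq {W : Type*} [Fintype W] [DecidableEq W] (f : W ↪ V) :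
    eigenspaceOn A lam (Finset.univ.map f) =
      (End.eigenspace (toLin' (A.submatrix f f)) lam).map
        (Function.ExtendByZero.linearMap ℝ f) := by
  have hext (y : W → ℝ) : Function.ExtendByZero.linearMap ℝ f y = Function.extend f y 0 := rfl
  ext x
  simp only [mem_eigenspaceOn, Submodule.mem_map, End.mem_eigenspace_iff, toLin'_apply, hext,
    Finset.mem_map, Finset.mem_univ, true_and]
  constructor
  · rintro ⟨hsupp, heig⟩
    refine ⟨x ∘ f, funext fun k => ?_, funext fun i => ?_⟩
    · simp [A.submatrix_mulVec_embedding f f hsupp, heig _ ⟨k, rfl⟩]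
    · by_cases hi : ∃ k, f k = i
      · obtain ⟨k, rfl⟩ := hi
        simp [f.injective.extend_apply]
      · rw [Function.extend_apply' _ _ _ hi, hsupp i hi]
        rfl
  · rintro ⟨y, hy, rfl⟩
    have hsupp : ∀ i ∉ Set.range f, Function.extend f y 0 i = 0 := fun i hi =>
      Function.extend_apply' _ _ _ hi
    refine ⟨hsupp, ?_⟩
    rintro _ ⟨k, rfl⟩
    have h := A.submatrix_mulVec_embedding f f hsupp
    rw [show Function.extend f y 0 ∘ f = y from funext (f.injective.extend_apply y 0), hy] at h
    simpa [f.injective.extend_apply] using (congrFun h k).symm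

theorem rootMultiplicity_charpoly_submatrix {W : Type*} [Fintype W] [DecidableEq W]
    (hA : A.IsSymm) (f : W ↪ V) :
    (A.submatrix f f).charpoly.rootMultiplicity lam = multOn A lam (Finset.univ.map f) := by
  rw [← ((isHermitian_iff_isSymm.mpr hA).submatrix f).finrank_eigenspace_toLin', multOn,
    eigenspaceOn_map_eq]
  exact (Submodule.equivMapOfInjective _
    (Function.ExtendByZero.linearMap_injective ℝ f.injective) _).finrank_eq

theorem multOn_empty : multOn A lam ∅ = 0 := by
  rw [multOn, Submodule.finrank_eq_zero, eq_bot_iff]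
  exact fun x hx => funext fun i => hx.1 i (Finset.notMem_empty i)

theorem mulVec_apply_eq_zero {P : Finset V} {x : V → ℝ} (hx : ∀ j ∉ P, x j = 0) {i : V}
    (hA : ∀ j ∈ P, A i j = 0) : (A *ᵥ x) i = 0 :=
  Finset.sum_eq_zero fun j _ => by by_cases hj : j ∈ P <;> simp [hj, hA, hx]

noncomputable def residualAt (A : Matrix V V ℝ) (lam : ℝ) (v : V) : (V → ℝ) →ₗ[ℝ] ℝ :=
  LinearMap.proj v ∘ₗ (toLin' A - lam • LinearMap.id)

theorem residualAt_apply (v : V) (x : V → ℝ) :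
    residualAt A lam v x = (A *ᵥ x) v - lam * x v := rfl

theorem exists_mem_eigenspaceOn_apply_eq_zero (hS : 2 ≤ multOn A lam S) (v : V) :
    ∃ x ∈ eigenspaceOn A lam S, x ≠ 0 ∧ x v = 0 := by
  have hpos := (Submodule.finrank_le_finrank_inf_ker_add_one (eigenspaceOn A lam S)
    (LinearMap.proj (R := ℝ) (φ := fun _ => ℝ) v)).trans' hS
  obtain ⟨x, ⟨hx, hxv⟩, hx0⟩ := Submodule.exists_mem_ne_zero_of_ne_bot
    (Submodule.one_le_finrank_iff.mp (Nat.le_of_succ_le_succ hpos))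
  exact ⟨x, hx, hx0, hxv⟩

variable [DecidableEq V]

theorem rootMultiplicity_charpoly (hA : A.IsSymm) (lam : ℝ) :
    A.charpoly.rootMultiplicity lam = multOn A lam Finset.univ := by
  have h := rootMultiplicity_charpoly_submatrix (lam := lam) hA (Function.Embedding.refl V)
  rwa [Finset.map_refl] at h

theorem eigenspaceOn_erase_inf_ker_le (v : V) :
    eigenspaceOn A lam (S.erase v) ⊓ LinearMap.ker (residualAt A lam v) ≤
      eigenspaceOn A lam S := by
  rintro x ⟨⟨hsupp, heig⟩, hres⟩
  rw [SetLike.mem_coe, LinearMap.mem_ker, residualAt_apply, sub_eq_zero] at hres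
  refine ⟨fun i hi => hsupp i (fun h => hi (Finset.mem_of_mem_erase h)), fun i hi => ?_⟩
  by_cases hiv : i = v
  · exact hiv ▸ hres
  · exact heig i (Finset.mem_erase.mpr ⟨hiv, hi⟩)

theorem eigenspaceOn_inf_ker_proj_le (v : V) :
    eigenspaceOn A lam S ⊓ LinearMap.ker (LinearMap.proj v) ≤
      eigenspaceOn A lam (S.erase v) := by
  rintro x ⟨⟨hsupp, heig⟩, hxv⟩
  refine ⟨fun i hi => ?_, fun i hi => heig i (Finset.mem_of_mem_erase hi)⟩
  by_cases hiv : i = v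
  · exact hiv ▸ hxv
  · exact hsupp i (fun h => hi (Finset.mem_erase.mpr ⟨hiv, h⟩))

theorem multOn_erase_le (v : V) : multOn A lam (S.erase v) ≤ multOn A lam S + 1 := by
  by_cases hv : v ∈ S
  · exact (Submodule.finrank_le_finrank_inf_ker_add_one _ (residualAt A lam v)).trans
      (Nat.add_le_add_right (Submodule.finrank_mono (eigenspaceOn_erase_inf_ker_le v)) 1)
  · rw [Finset.erase_eq_of_notMem hv]
    exact Nat.le_succ _

theorem apply_eq_zero_of_mem_eigenspaceOn (hA : A.IsSymm) {v : V} {y z : V → ℝ}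
    (hy : y ∈ eigenspaceOn A lam (S.erase v)) (hyv : (A *ᵥ y) v ≠ 0)
    (hz : z ∈ eigenspaceOn A lam S) : z v = 0 := by
  obtain ⟨hysupp, hyeig⟩ := hy
  obtain ⟨hzsupp, hzeig⟩ := hz
  have hl : (A *ᵥ y - lam • y) ⬝ᵥ z = (A *ᵥ y) v * z v := by
    refine (Finset.sum_eq_single v (fun i _ hiv => ?_) (by simp)).trans
      (by simp [hysupp v (Finset.notMem_erase v S)])
    by_cases hi : i ∈ S
    · simp [hyeig i (Finset.mem_erase.mpr ⟨hiv, hi⟩)]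
    · simp [hzsupp i hi]
  have hr : y ⬝ᵥ (A *ᵥ z - lam • z) = 0 := by
    refine Finset.sum_eq_zero fun i _ => ?_
    by_cases hi : i ∈ S
    · simp [hzeig i hi]
    · simp [hysupp i (fun h => hi (Finset.mem_of_mem_erase h))]
  have hsymm : (A *ᵥ y - lam • y) ⬝ᵥ z = y ⬝ᵥ (A *ᵥ z - lam • z) := by
    rw [sub_dotProduct, dotProduct_sub, hA.mulVec_dotProduct, smul_dotProduct, dotProduct_smul]
  rw [hl, hr] at hsymm
  exact (mul_eq_zero.mp hsymm).resolve_left hyv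

theorem multOn_erase_eq_add_one (hA : A.IsSymm) {v : V} (hv : v ∈ S) {y : V → ℝ}
    (hy : y ∈ eigenspaceOn A lam (S.erase v)) (hyv : (A *ᵥ y) v ≠ 0) :
    multOn A lam (S.erase v) = multOn A lam S + 1 := by
  have heq : eigenspaceOn A lam (S.erase v) ⊓ LinearMap.ker (residualAt A lam v) =
      eigenspaceOn A lam S := by
    refine le_antisymm (eigenspaceOn_erase_inf_ker_le v) fun z hz => ?_
    have hzv := apply_eq_zero_of_mem_eigenspaceOn hA hy hyv hz
    refine ⟨eigenspaceOn_inf_ker_proj_le v ⟨hz, hzv⟩, ?_⟩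
    simp [residualAt_apply, hz.2 v hv, hzv]
  have hres : residualAt A lam v y ≠ 0 := by
    simpa [residualAt_apply, hy.1 v (Finset.notMem_erase v S)] using hyv
  rw [multOn, multOn, ← Submodule.finrank_inf_ker_add_one _ hy hres, heq]

theorem piecewise_mem_eigenspaceOn {P Q : Finset V} (hsep : ∀ i ∈ P, ∀ j ∈ Q, A i j = 0)
    {x : V → ℝ} (hx : x ∈ eigenspaceOn A lam (P ∪ Q)) :
    P.piecewise x 0 ∈ eigenspaceOn A lam P := by
  refine ⟨fun i hi => by simp [hi], fun i hi => ?_⟩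
  have hrest : (A *ᵥ (x - P.piecewise x 0)) i = 0 := by
    refine mulVec_apply_eq_zero (P := Q) (fun j hj => ?_) (hsep i hi)
    by_cases hjP : j ∈ P
    · simp [hjP]
    · simp [hjP, hx.1 j (by simp [hjP, hj])]
  rw [mulVec_sub, Pi.sub_apply, sub_eq_zero] at hrest
  rw [← hrest, hx.2 i (Finset.mem_union_left Q hi), Finset.piecewise_eq_of_mem _ _ _ hi]

theorem eigenspaceOn_le_union {P Q : Finset V} (hPQ : Disjoint P Q)
    (hsep : ∀ i ∈ Q, ∀ j ∈ P, A i j = 0) :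
    eigenspaceOn A lam P ≤ eigenspaceOn A lam (P ∪ Q) := by
  refine fun x ⟨hsupp, heig⟩ => ⟨fun i hi => hsupp i (fun h => hi (Finset.mem_union_left Q h)),
    fun i hi => ?_⟩
  rcases Finset.mem_union.mp hi with hiP | hiQ
  · exact heig i hiP
  · rw [mulVec_apply_eq_zero hsupp (hsep i hiQ), hsupp i (Finset.disjoint_right.mp hPQ hiQ),
      mul_zero]

theorem multOn_union {P Q : Finset V} (hPQ : Disjoint P Q)
    (hPQsep : ∀ i ∈ P, ∀ j ∈ Q, A i j = 0) (hQPsep : ∀ i ∈ Q, ∀ j ∈ P, A i j = 0) :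
    multOn A lam (P ∪ Q) = multOn A lam P + multOn A lam Q := by
  have hsup : eigenspaceOn A lam P ⊔ eigenspaceOn A lam Q = eigenspaceOn A lam (P ∪ Q) := by
    refine le_antisymm (sup_le (eigenspaceOn_le_union hPQ hQPsep) ?_) fun x hx => ?_
    · rw [Finset.union_comm]
      exact eigenspaceOn_le_union hPQ.symm hPQsep
    · have hsplit : P.piecewise x 0 + Q.piecewise x 0 = x := funext fun i => by
        by_cases hiP : i ∈ P
        · simp [hiP, Finset.disjoint_left.mp hPQ hiP]
        · by_cases hiQ : i ∈ Q
          · simp [hiP, hiQ]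
          · simp [hiP, hiQ, hx.1 i (by simp [hiP, hiQ])]
      exact hsplit ▸ Submodule.add_mem_sup (piecewise_mem_eigenspaceOn hPQsep hx)
        (piecewise_mem_eigenspaceOn hQPsep (Finset.union_comm P Q ▸ hx))
  have hinf : eigenspaceOn A lam P ⊓ eigenspaceOn A lam Q = ⊥ :=
    eq_bot_iff.mpr fun x ⟨hxP, hxQ⟩ => funext fun i => by
      by_cases hiP : i ∈ P
      · exact hxQ.1 i (Finset.disjoint_left.mp hPQ hiP)
      · exact hxP.1 i hiP
  have := Submodule.finrank_sup_add_finrank_inf_eq (eigenspaceOn A lam P) (eigenspaceOn A lam Q)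
  rwa [hsup, hinf, finrank_bot, add_zero] at this

end LocalEigenspaces

section Branches

variable {G : SimpleGraph V} {A : Matrix V V ℝ} {lam : ℝ} {S C : Finset V} {u v : V}

def HasGraph (A : Matrix V V ℝ) (G : SimpleGraph V) : Prop :=
  ∀ i j, i ≠ j → (A i j ≠ 0 ↔ G.Adj i j)

variable [DecidableEq V]

theorem HasGraph.apply_eq_zero_of_mem_componentsIn (hAG : HasGraph A G) {U K : Finset V}
    (hK : K ∈ G.componentsIn U) {i j : V} (hi : i ∈ K) (hj : j ∈ U \ K) :
    A i j = 0 ∧ A j i = 0 := by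
  obtain ⟨hjU, hjK⟩ := Finset.mem_sdiff.mp hj
  have hiU := subset_of_mem_componentsIn hK hi
  rw [← componentIn_eq_of_mem_componentsIn hK hi] at hjK
  have hij : i ≠ j := by rintro rfl; exact hjK (self_mem_componentIn hiU)
  have hadj : ¬ G.Adj i j := fun h => hjK (mem_componentIn_of_adj (self_mem_componentIn hiU) hjU h)
  exact ⟨not_not.mp fun h => hadj ((hAG i j hij).mp h),
    not_not.mp fun h => hadj ((hAG j i hij.symm).mp h).symm⟩

variable [Fintype V]

theorem HasGraph.multOn_union_of_mem_componentsIn (hAG : HasGraph A G) {U K P Q : Finset V}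
    (hK : K ∈ G.componentsIn U) (hP : P ⊆ K) (hQ : Q ⊆ U \ K) :
    multOn A lam (P ∪ Q) = multOn A lam P + multOn A lam Q :=
  multOn_union (Finset.disjoint_of_subset_left hP
      (Finset.disjoint_of_subset_right hQ Finset.disjoint_sdiff))
    (fun _ hi _ hj => (hAG.apply_eq_zero_of_mem_componentsIn hK (hP hi) (hQ hj)).1)
    (fun _ hi _ hj => (hAG.apply_eq_zero_of_mem_componentsIn hK (hP hj) (hQ hi)).2)

theorem HasGraph.multOn_eq_add_sdiff (hAG : HasGraph A G) {U K : Finset V}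
    (hK : K ∈ G.componentsIn U) : multOn A lam U = multOn A lam K + multOn A lam (U \ K) := by
  rw [← hAG.multOn_union_of_mem_componentsIn hK subset_rfl subset_rfl,
    Finset.union_sdiff_of_subset (subset_of_mem_componentsIn hK)]

theorem HasGraph.multOn_eq_sum_componentsIn (hAG : HasGraph A G) (U : Finset V) :
    multOn A lam U = ∑ K ∈ G.componentsIn U, multOn A lam K := by
  suffices ∀ 𝒦 ⊆ G.componentsIn U, multOn A lam (𝒦.biUnion id) = ∑ K ∈ 𝒦, multOn A lam K by
    rw [← this _ subset_rfl, biUnion_componentsIn]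
  intro 𝒦
  induction 𝒦 using Finset.induction_on with
  | empty => simp [multOn_empty]
  | insert K 𝒦 hK ih =>
    intro h𝒦
    have hKU := h𝒦 (Finset.mem_insert_self K 𝒦)
    have hrest : 𝒦.biUnion id ⊆ U \ K := fun x hx => by
      obtain ⟨L, hL, hxL⟩ := Finset.mem_biUnion.mp hx
      have hLU := h𝒦 (Finset.mem_insert_of_mem hL)
      refine Finset.mem_sdiff.mpr ⟨subset_of_mem_componentsIn hLU hxL, fun hxK => ?_⟩
      exact Finset.disjoint_left.mp
        (disjoint_of_mem_componentsIn hKU hLU (ne_of_mem_of_not_mem hL hK).symm) hxK hxL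
    rw [Finset.biUnion_insert, id, hAG.multOn_union_of_mem_componentsIn hKU subset_rfl hrest,
      Finset.sum_insert hK, ih ((Finset.subset_insert K 𝒦).trans h𝒦)]

def IsParter (A : Matrix V V ℝ) (lam : ℝ) (S : Finset V) (v : V) : Prop :=
  v ∈ S ∧ multOn A lam (S.erase v) = multOn A lam S + 1

noncomputable def eigenBranches (G : SimpleGraph V) (A : Matrix V V ℝ) (lam : ℝ)
    (S : Finset V) (v : V) : Finset (Finset V) :=
  (G.componentsIn (S.erase v)).filter (fun K => 0 < multOn A lam K)

theorem disjoint_of_mem_eigenBranches {K L : Finset V} (hK : K ∈ eigenBranches G A lam S v)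
    (hL : L ∈ eigenBranches G A lam S v) (hKL : K ≠ L) : Disjoint K L :=
  disjoint_of_mem_componentsIn (Finset.mem_filter.mp hK).1 (Finset.mem_filter.mp hL).1 hKL

theorem HasGraph.multOn_erase_eq_sum_eigenBranches (hAG : HasGraph A G) (S : Finset V) (v : V) :
    multOn A lam (S.erase v) = ∑ K ∈ eigenBranches G A lam S v, multOn A lam K := by
  rw [hAG.multOn_eq_sum_componentsIn, eigenBranches, Finset.sum_filter_of_ne]
  exact fun _ _ h => Nat.pos_of_ne_zero h

theorem isParter_of_adj (hA : A.IsSymm) (hAG : HasGraph A G) (hG : G.IsAcyclic) (hv : v ∈ S)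
    {w : V} (hvw : G.Adj v w) {x : V → ℝ} (hx : x ∈ eigenspaceOn A lam S) (hxv : x v = 0)
    (hxw : x w ≠ 0) : IsParter A lam S v := by
  have hwS : w ∈ S.erase v := Finset.mem_erase.mpr ⟨hvw.ne', by_contra fun h => hxw (hx.1 w h)⟩
  set B := G.componentIn (S.erase v) w
  have hB : B ∈ G.componentsIn (S.erase v) := componentIn_mem_componentsIn hwS
  have hunion : B ∪ (S.erase v \ B) = S.erase v := Finset.union_sdiff_of_subset componentIn_subset
  have hx' : x ∈ eigenspaceOn A lam (B ∪ (S.erase v \ B)) := by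
    rw [hunion]
    exact eigenspaceOn_inf_ker_proj_le v ⟨hx, hxv⟩
  have hy : B.piecewise x 0 ∈ eigenspaceOn A lam (S.erase v) := by
    rw [← hunion]
    exact eigenspaceOn_le_union Finset.disjoint_sdiff
      (fun _ hi _ hj => (hAG.apply_eq_zero_of_mem_componentsIn hB hj hi).2)
      (piecewise_mem_eigenspaceOn
        (fun _ hi _ hj => (hAG.apply_eq_zero_of_mem_componentsIn hB hi hj).1) hx')
  -- `w` is the only neighbour of `v` in `B`, since `G` is acyclic
  have hAy : (A *ᵥ B.piecewise x 0) v = A v w * x w := by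
    refine (Finset.sum_eq_single w (fun j _ hjw => ?_) (by simp)).trans
      (by rw [Finset.piecewise_eq_of_mem _ _ _ (self_mem_componentIn hwS)])
    by_cases hjB : j ∈ B
    · have hvj : v ≠ j := by rintro rfl; exact Finset.notMem_erase v S (componentIn_subset hjB)
      have : A v j = 0 := not_not.mp fun h => hjw <|
        hG.eq_of_adj_of_mem_componentIn (Finset.notMem_erase v S) hvw ((hAG v j hvj).mp h) hjB
      simp [this]
    · simp [hjB]
  refine ⟨hv, multOn_erase_eq_add_one hA hv hy ?_⟩
  rw [hAy]
  exact mul_ne_zero ((hAG v w hvw.ne).mpr hvw) hxw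

theorem exists_isParter (hA : A.IsSymm) (hAG : HasGraph A G) (hG : G.IsAcyclic)
    (hS : G.IsConnectedIn S) (hm : 2 ≤ multOn A lam S) : ∃ v, IsParter A lam S v := by
  obtain ⟨v₀, hv₀⟩ : S.Nonempty := Finset.nonempty_iff_ne_empty.mpr fun h => by
    rw [h, multOn_empty] at hm
    omega
  obtain ⟨x, hx, hx0, hxv₀⟩ := exists_mem_eigenspaceOn_apply_eq_zero hm v₀
  obtain ⟨w₀, hw₀⟩ := Function.ne_iff.mp hx0
  obtain ⟨p, hp⟩ := hS w₀ (by_contra fun h => hw₀ (hx.1 w₀ h)) v₀ hv₀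
  obtain ⟨d, hd, hd₁, hd₂⟩ := p.exists_boundary_dart {z | x z ≠ 0} hw₀ (by simpa using hxv₀)
  exact ⟨d.snd, isParter_of_adj hA hAG hG (hp _ (p.dart_snd_mem_support_of_mem_darts hd))
    d.adj.symm hx (by simpa using hd₂) hd₁⟩

theorem IsParter.exists_two_le_multOn_of_card_lt_three (hAG : HasGraph A G)
    (hv : IsParter A lam S v) (hm : 2 ≤ multOn A lam S)
    (h3 : (eigenBranches G A lam S v).card < 3) :
    ∃ C ∈ eigenBranches G A lam S v, 2 ≤ multOn A lam C ∧
      (2 ≤ (eigenBranches G A lam S v).card → multOn A lam C ≤ multOn A lam S) := by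
  have hsum := hAG.multOn_erase_eq_sum_eigenBranches (lam := lam) S v
  rw [hv.2] at hsum
  obtain ⟨C, hC, hC2⟩ := Finset.exists_lt_of_sum_lt (s := eigenBranches G A lam S v)
    (f := fun _ => 1) (g := multOn A lam)
    (by simp only [Finset.sum_const, smul_eq_mul, mul_one]; omega)
  refine ⟨C, hC, hC2, fun h2 => ?_⟩
  obtain ⟨D, hD, hDC⟩ := Finset.exists_mem_ne h2 C
  have := Finset.single_lt_sum hDC hC hD (Finset.mem_filter.mp hD).2 fun _ _ _ => Nat.zero_le _
  omega

theorem IsParter.of_mem_componentsIn (hAG : HasGraph A G) (hv : IsParter A lam S v)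
    (hC : C ∈ G.componentsIn (S.erase v)) (hu : IsParter A lam C u) : IsParter A lam S u := by
  have hCS := subset_of_mem_componentsIn hC
  have hset : C.erase u ∪ (S.erase v \ C) = (S.erase u).erase v := by
    ext y
    have := @hCS y
    by_cases hyC : y ∈ C <;> by_cases hyu : y = u <;> simp_all [hu.1]
  -- `m(S - u - v) = m(C - u) + m(S - v - C) = m(S) + 2`, and each deletion adds at most one
  have hsplit_uv := hAG.multOn_union_of_mem_componentsIn (lam := lam) hC
    (Finset.erase_subset u C) subset_rfl
  rw [hset] at hsplit_uv
  have hsplit_v := hAG.multOn_eq_add_sdiff (lam := lam) hC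
  have h₁ := multOn_erase_le (A := A) (lam := lam) (S := S.erase u) v
  have h₂ := multOn_erase_le (A := A) (lam := lam) (S := S) u
  exact ⟨Finset.mem_of_mem_erase (hCS hu.1), by linarith [hu.2, hv.2]⟩

theorem erase_eigenBranches_subset (hG : G.IsAcyclic) (hC : C ∈ G.componentsIn (S.erase v))
    {b : V} (hbC : b ∈ C) (hvb : G.Adj v b) :
    (eigenBranches G A lam C u).erase (G.componentIn (C.erase u) b) ⊆
      eigenBranches G A lam S u := by
  intro K hK
  obtain ⟨hKb, hK⟩ := Finset.mem_erase.mp hK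
  obtain ⟨hK, hKm⟩ := Finset.mem_filter.mp hK
  obtain ⟨x, hx, rfl⟩ := mem_componentsIn.mp hK
  have hbx : b ∉ G.componentIn (C.erase u) x := fun h => hKb (componentIn_eq_of_mem h).symm
  rw [← hG.componentIn_erase_eq_of_notMem hC hbC hvb hx hbx] at hKm ⊢
  exact Finset.mem_filter.mpr ⟨componentIn_mem_componentsIn (Finset.erase_subset_erase u
    ((subset_of_mem_componentsIn hC).trans (Finset.erase_subset v S)) hx), hKm⟩

theorem IsParter.three_le_card_eigenBranches_or (hAG : HasGraph A G) (hG : G.IsAcyclic)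
    (hS : G.IsConnectedIn S) (hv : IsParter A lam S v) (hC : C ∈ G.componentsIn (S.erase v))
    (hu : IsParter A lam C u) (h3 : 3 ≤ (eigenBranches G A lam C u).card) :
    3 ≤ (eigenBranches G A lam S u).card ∨
      multOn A lam C = multOn A lam S + 1 ∧ 2 ≤ (eigenBranches G A lam S u).card := by
  have hCS := subset_of_mem_componentsIn hC
  have hvC : v ∉ C := fun h => Finset.notMem_erase v S (hCS h)
  obtain ⟨b, hvb, hub⟩ := hS.exists_adj_mem_componentIn_erase hv.1 (hCS hu.1)
  have hbC : b ∈ C := by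
    rw [← componentIn_eq_of_mem_componentsIn hC hu.1, componentIn_eq_of_mem hub]
    exact self_mem_componentIn (mem_componentIn.mp hub).mem_left
  set Kb := G.componentIn (C.erase u) b
  set D := G.componentIn (S.erase u) v
  set Λ := (eigenBranches G A lam C u).erase Kb
  have hΛ : Λ ⊆ eigenBranches G A lam S u := erase_eigenBranches_subset hG hC hbC hvb
  have hcard : 2 ≤ Λ.card := by
    have : (eigenBranches G A lam C u).card - 1 ≤ Λ.card := Finset.pred_card_le_card_erase
    omega
  by_cases hKb : Kb ∈ eigenBranches G A lam C u
  · by_cases hDm : 0 < multOn A lam D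
    · left
      have hvSu : v ∈ S.erase u := Finset.mem_erase.mpr ⟨fun h => hvC (h ▸ hu.1), hv.1⟩
      have hDΛ : D ∉ Λ := fun h => hvC <| Finset.mem_of_mem_erase <| subset_of_mem_componentsIn
        (Finset.mem_filter.mp (Finset.mem_of_mem_erase h)).1 (self_mem_componentIn hvSu)
      have hD : D ∈ eigenBranches G A lam S u :=
        Finset.mem_filter.mpr ⟨componentIn_mem_componentsIn hvSu, hDm⟩
      have := Finset.card_le_card (Finset.insert_subset hD hΛ)
      rw [Finset.card_insert_of_notMem hDΛ] at this
      omega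
    · -- `m(D - v) = m(Kb) + m(S - v - C)` is at most `m(D) + 1 = 1`
      right
      have hDv := multOn_erase_le (A := A) (lam := lam) (S := D) v
      rw [hG.erase_componentIn_erase_eq hS hv.1 hC hbC hvb hu.1,
        hAG.multOn_union_of_mem_componentsIn hC
          (componentIn_subset.trans (Finset.erase_subset u C)) subset_rfl] at hDv
      have hKbm := (Finset.mem_filter.mp hKb).2
      have hsplit_v := hAG.multOn_eq_add_sdiff (lam := lam) hC
      exact ⟨by linarith [hv.2], hcard.trans (Finset.card_le_card hΛ)⟩
  · left
    rw [show Λ = eigenBranches G A lam C u from Finset.erase_eq_of_notMem hKb] at hΛ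
    exact h3.trans (Finset.card_le_card hΛ)

theorem exists_isParter_three_le_card_eigenBranches (hA : A.IsSymm) (hAG : HasGraph A G)
    (hG : G.IsAcyclic) (hS : G.IsConnectedIn S) (hm : 2 ≤ multOn A lam S) :
    ∃ u, IsParter A lam S u ∧ 3 ≤ (eigenBranches G A lam S u).card := by
  induction S using Finset.strongInduction with
  | H S ih =>
  have descend {v C} (hv : IsParter A lam S v) (hC : C ∈ eigenBranches G A lam S v)
      (hC2 : 2 ≤ multOn A lam C) : ∃ u, IsParter A lam S u ∧
        (3 ≤ (eigenBranches G A lam S u).card ∨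
          multOn A lam C = multOn A lam S + 1 ∧ 2 ≤ (eigenBranches G A lam S u).card) := by
    have hC' := (Finset.mem_filter.mp hC).1
    obtain ⟨x, -, rfl⟩ := mem_componentsIn.mp hC'
    obtain ⟨u, hu, h3⟩ := ih _ (componentIn_subset.trans_ssubset (Finset.erase_ssubset hv.1))
      isConnectedIn_componentIn hC2
    exact ⟨u, hv.of_mem_componentsIn hAG hC' hu,
      hv.three_le_card_eigenBranches_or hAG hG hS hC' hu h3⟩
  by_contra! hnone
  obtain ⟨v, hv⟩ := exists_isParter hA hAG hG hS hm
  obtain ⟨C, hC, hC2, -⟩ := hv.exists_two_le_multOn_of_card_lt_three hAG hm (hnone v hv)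
  obtain ⟨u, hu, h3 | ⟨-, h2⟩⟩ := descend hv hC hC2
  · exact (hnone u hu).not_ge h3
  -- with two eigenbranches at `u`, the branch we descend into has `m(C') ≤ m(S)`
  obtain ⟨C', hC', hC'2, hC'le⟩ := hu.exists_two_le_multOn_of_card_lt_three hAG hm (hnone u hu)
  obtain ⟨w, hw, h3 | ⟨hC'eq, -⟩⟩ := descend hu hC' hC'2
  · exact (hnone w hw).not_ge h3
  · have := hC'le h2
    omega

end Branches

theorem rootMultiplicity_charpolyOn {n : ℕ} {A : Matrix (Fin n) (Fin n) ℝ} (hA : A.IsSymm)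
    (lam : ℝ) (S : Finset (Fin n)) : (charpolyOn A S).rootMultiplicity lam = multOn A lam S := by
  have h := rootMultiplicity_charpoly_submatrix (lam := lam) hA
    (Function.Embedding.subtype (· ∈ S))
  rwa [Finset.univ_eq_attach, Finset.attach_map_val] at h

theorem isRoot_charpolyOn_iff {n : ℕ} {A : Matrix (Fin n) (Fin n) ℝ} (hA : A.IsSymm)
    {lam : ℝ} {S : Finset (Fin n)} : (charpolyOn A S).IsRoot lam ↔ 0 < multOn A lam S := by
  rw [← rootMultiplicity_charpolyOn hA]
  exact (rootMultiplicity_pos (Matrix.charpoly_monic _).ne_zero).symm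

theorem rootMultiplicity_charpoly_submatrix_succAbove {n : ℕ}
    {A : Matrix (Fin (n + 1)) (Fin (n + 1)) ℝ} (hA : A.IsSymm) (lam : ℝ) (u : Fin (n + 1)) :
    (A.submatrix u.succAbove u.succAbove).charpoly.rootMultiplicity lam =
      multOn A lam (Finset.univ.erase u) := by
  rw [Fin.univ_succAbove n u, Finset.erase_cons]
  exact rootMultiplicity_charpoly_submatrix hA (Fin.succAboveEmb u)

theorem branchAt_eq_componentIn {n : ℕ} (G : SimpleGraph (Fin n)) (v w : Fin n) :
    branchAt G v w = G.componentIn (Finset.univ.erase v) w := by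
  ext x
  simp only [branchAt, mem_componentIn, ReachableIn, Finset.mem_filter, Finset.mem_univ,
    Finset.mem_erase, true_and, and_true]
  exact exists_congr fun p => ⟨fun h y hy hyv => h (hyv ▸ hy), fun h hv => h v hv rfl⟩

theorem exists_branchAt_eq_of_mem_eigenBranches {n : ℕ} {T : SimpleGraph (Fin n)}
    {A : Matrix (Fin n) (Fin n) ℝ} (hA : A.IsSymm) {lam : ℝ} {u : Fin n} {K : Finset (Fin n)}
    (hK : K ∈ eigenBranches T A lam Finset.univ u) :
    ∃ w, w ≠ u ∧ w ∈ K ∧ branchAt T u w = K ∧ (charpolyOn A K).IsRoot lam := by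
  obtain ⟨hK, hKm⟩ := Finset.mem_filter.mp hK
  obtain ⟨w, hw, rfl⟩ := mem_componentsIn.mp hK
  exact ⟨w, Finset.ne_of_mem_erase hw, self_mem_componentIn hw, branchAt_eq_componentIn T u w,
    (isRoot_charpolyOn_iff hA).mpr hKm⟩

end ParterWiener

open ParterWiener SimpleGraph in
/-- Parter–Wiener theorem (strong form): if a matrix whose graph is a tree has an
eigenvalue `lam` of multiplicity at least 2, then there is a vertex `u` of degree at
least 3 whose deletion increases the multiplicity by one, and at least three
components of `T - u` carry `lam` as an eigenvalue. -/
theorem parter_wiener_strong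
    (n : ℕ) (T : SimpleGraph (Fin (n + 1))) (hT : T.IsTree)
    (A : Matrix (Fin (n + 1)) (Fin (n + 1)) ℝ) (hsymm : A.IsSymm)
    (hgraph : ∀ i j : Fin (n + 1), i ≠ j → (A i j ≠ 0 ↔ T.Adj i j))
    (lam : ℝ) (hmult : 2 ≤ A.charpoly.rootMultiplicity lam) :
    ∃ u : Fin (n + 1),
      3 ≤ T.degree u ∧
      (A.submatrix u.succAbove u.succAbove).charpoly.rootMultiplicity lam =
        A.charpoly.rootMultiplicity lam + 1 ∧
      ∃ w₁ w₂ w₃ : Fin (n + 1),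
        w₁ ≠ u ∧ w₂ ≠ u ∧ w₃ ≠ u ∧
        w₂ ∉ branchAt T u w₁ ∧ w₃ ∉ branchAt T u w₁ ∧ w₃ ∉ branchAt T u w₂ ∧
        (charpolyOn A (branchAt T u w₁)).IsRoot lam ∧
        (charpolyOn A (branchAt T u w₂)).IsRoot lam ∧
        (charpolyOn A (branchAt T u w₃)).IsRoot lam := by
  have hS : T.IsConnectedIn Finset.univ := fun a _ b _ =>
    (hT.connected.preconnected a b).elim fun p => ⟨p, by simp⟩
  rw [rootMultiplicity_charpoly hsymm] at hmult ⊢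
  obtain ⟨u, hu, h3⟩ :=
    exists_isParter_three_le_card_eigenBranches hsymm hgraph hT.isAcyclic hS hmult
  have hdeg : 3 ≤ T.degree u := h3.trans <| (Finset.card_filter_le _ _).trans
    (hS.card_componentsIn_erase_le_degree (Finset.mem_univ u))
  obtain ⟨K₁, K₂, K₃, hK₁, hK₂, hK₃, h12, h13, h23⟩ := Finset.two_lt_card_iff.mp h3
  obtain ⟨w₁, hw₁u, -, rfl, hr₁⟩ := exists_branchAt_eq_of_mem_eigenBranches hsymm hK₁
  obtain ⟨w₂, hw₂u, hw₂, rfl, hr₂⟩ := exists_branchAt_eq_of_mem_eigenBranches hsymm hK₂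
  obtain ⟨w₃, hw₃u, hw₃, rfl, hr₃⟩ := exists_branchAt_eq_of_mem_eigenBranches hsymm hK₃
  exact ⟨u, hdeg, by rw [rootMultiplicity_charpoly_submatrix_succAbove hsymm, hu.2],
    w₁, w₂, w₃, hw₁u, hw₂u, hw₃u,
    Finset.disjoint_right.mp (disjoint_of_mem_eigenBranches hK₁ hK₂ h12) hw₂,
    Finset.disjoint_right.mp (disjoint_of_mem_eigenBranches hK₁ hK₃ h13) hw₃,
    Finset.disjoint_right.mp (disjoint_of_mem_eigenBranches hK₂ hK₃ h23) hw₃, hr₁, hr₂, hr₃⟩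
end

section
/- Let A be a real symmetric matrix whose graph is a tree T, let v be a vertex, and suppose λ ∈ σ(A) ∩ σ(A(v)). Then there exists a vertex u of T such that m_{A(u)}(λ) = m_A(λ) + 1. -/
/-!
Put `B = A - λ`; since `A` is symmetric, the multiplicity of `λ` in `A` or in `A(u)` is the nullity
of `B` or of `B(u)`. Deleting a vertex `z` raises the nullity by one as soon as some `y` with
`y z = 0` has `B y = c e_z`, `c ≠ 0`: kernel vectors of `B` are orthogonal to `B y`, hence vanish
at `z`, and the kernel of `B(z)`, extended by zero, is then exactly `ker B ⊕ span y`.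

To find such a `y`, extend a null vector of `B(v)` by zero at `v` to get `x`. Either `x` itself
works with `z = v`, or `B x = 0`; in the latter case take an edge `zw` with `x z = 0 ≠ x w` and let
`y` be `x` restricted to the branch of `T - z` containing `w`. As `T` is a tree, `z` is the only
vertex outside that branch adjacent to it, and `w` its only neighbour there, so
`B y = (B z w * x w) e_z`.
-/

open Polynomial Module Matrix

section
variable {R : Type*} [CommSemiring R] {n : ℕ}

def Fin.insertNthZeroₗ (z : Fin (n + 1)) : (Fin n → R) →ₗ[R] Fin (n + 1) → R where
  toFun u := z.insertNth 0 u
  map_add' u v := by simpa using Fin.insertNth_add (α := fun _ => R) z 0 0 u v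
  map_smul' c u := by ext j; induction j using z.succAboveCases <;> simp

@[simp]
lemma Fin.insertNthZeroₗ_apply (z : Fin (n + 1)) (u : Fin n → R) :
    Fin.insertNthZeroₗ z u = z.insertNth 0 u :=
  rfl

lemma Fin.insertNthZeroₗ_injective (z : Fin (n + 1)) :
    Function.Injective (Fin.insertNthZeroₗ (R := R) z) :=
  Fin.insertNth_right_injective (α := fun _ => R) 0

lemma Matrix.submatrix_succAbove_mulVec (B : Matrix (Fin (n + 1)) (Fin (n + 1)) R)
    (z : Fin (n + 1)) (u : Fin n → R) :
    B.submatrix z.succAbove z.succAbove *ᵥ u = z.removeNth (B *ᵥ z.insertNth 0 u) := by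
  ext i
  simp [mulVec, dotProduct, Fin.sum_univ_succAbove _ z, Fin.removeNth]

lemma Matrix.mem_map_ker_submatrix_succAbove_iff (B : Matrix (Fin (n + 1)) (Fin (n + 1)) R)
    (z : Fin (n + 1)) (x : Fin (n + 1) → R) :
    x ∈ (LinearMap.ker (B.submatrix z.succAbove z.succAbove).mulVecLin).map
        (Fin.insertNthZeroₗ z) ↔ x z = 0 ∧ B *ᵥ x = Pi.single z ((B *ᵥ x) z) := by
  simp only [Submodule.mem_map, LinearMap.mem_ker, mulVecLin_apply, submatrix_succAbove_mulVec,
    Fin.insertNthZeroₗ_apply]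
  constructor
  · rintro ⟨u, hu, rfl⟩
    refine ⟨Fin.insertNth_apply_same _ _ _, ?_⟩
    rw [← Fin.insertNth_zero_right, ← hu, Fin.insertNth_self_removeNth]
  · rintro ⟨hxz, hBx⟩
    have hx : z.insertNth 0 (z.removeNth x) = x := by rw [← hxz, Fin.insertNth_self_removeNth]
    refine ⟨z.removeNth x, ?_, hx⟩
    rw [hx, hBx]
    ext i
    simp [Fin.removeNth, Fin.succAbove_ne]

lemma Matrix.IsSymm.apply_mul_eq_zero_of_mulVec_eq_single {ι : Type*} [Fintype ι]
    [DecidableEq ι] {B : Matrix ι ι R} (hB : B.IsSymm) {x y : ι → R} {z : ι} {c : R} (hx : B *ᵥ x = 0) (hy : B *ᵥ y = Pi.single z c) : x z * c = 0 :=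
  calc x z * c = x ⬝ᵥ B *ᵥ y := by rw [hy, dotProduct_single]
    _ = (B *ᵥ x) ⬝ᵥ y := by rw [dotProduct_mulVec, ← mulVec_transpose, hB]
    _ = 0 := by rw [hx, zero_dotProduct]

theorem Matrix.IsSymm.finrank_ker_submatrix_succAbove_eq_add_one {K : Type*} [Field K]
    {B : Matrix (Fin (n + 1)) (Fin (n + 1)) K} (hB : B.IsSymm) {z : Fin (n + 1)}
    {y : Fin (n + 1) → K} {c : K} (hyz : y z = 0) (hBy : B *ᵥ y = Pi.single z c) (hc : c ≠ 0) :
    finrank K (LinearMap.ker (B.submatrix z.succAbove z.succAbove).mulVecLin) =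
      finrank K (LinearMap.ker B.mulVecLin) + 1 := by
  have hy : y ∉ LinearMap.ker B.mulVecLin := fun h => hc <| by
    simpa [hBy] using congrFun (LinearMap.mem_ker.1 h) z
  have hmap : (LinearMap.ker (B.submatrix z.succAbove z.succAbove).mulVecLin).map
      (Fin.insertNthZeroₗ z) = LinearMap.ker B.mulVecLin ⊔ K ∙ y := by
    apply le_antisymm
    · intro x hx
      obtain ⟨-, hBx⟩ := (mem_map_ker_submatrix_succAbove_iff B z x).1 hx
      set t := (B *ᵥ x) z / c
      refine Submodule.mem_sup.2 ⟨x - t • y, ?_, t • y,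
        Submodule.smul_mem _ t (Submodule.mem_span_singleton_self y), sub_add_cancel _ _⟩
      rw [LinearMap.mem_ker, mulVecLin_apply, mulVec_sub, mulVec_smul, hBx, hBy, ← Pi.single_smul,
        ← Pi.single_sub, smul_eq_mul, div_mul_cancel₀ _ hc, sub_self, Pi.single_zero]
    · refine sup_le (fun x hx => ?_) ((Submodule.span_singleton_le_iff_mem _ _).2 ?_)
      · rw [LinearMap.mem_ker, mulVecLin_apply] at hx
        have hxz := hB.apply_mul_eq_zero_of_mulVec_eq_single hx hBy
        refine (mem_map_ker_submatrix_succAbove_iff B z x).2 ⟨?_, by simp [hx]⟩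
        simpa [hc] using hxz
      · exact (mem_map_ker_submatrix_succAbove_iff B z y).2 ⟨hyz, by rw [hBy]; simp⟩
  rw [(Submodule.equivMapOfInjective _ (Fin.insertNthZeroₗ_injective z) _).finrank_eq, hmap,
    Submodule.finrank_sup_span_singleton hy]

end

lemma Matrix.IsSymm.isFinitelySemisimple_toLin' {ι : Type*} [Fintype ι] [DecidableEq ι]
    {M : Matrix ι ι ℝ} (hM : M.IsSymm) : Module.End.IsFinitelySemisimple (toLin' M) := by
  have hE :=
    (isSymmetric_toEuclideanLin_iff.mpr (isHermitian_iff_isSymm.mpr hM)).isFinitelySemisimple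
  rw [Module.End.isFinitelySemisimple_iff_isSemisimple] at hE ⊢
  exact ((WithLp.linearEquiv 2 ℝ (ι → ℝ)).symm.isSemisimple_iff _ _ rfl).mpr hE

theorem Matrix.IsSymm.rootMultiplicity_charpoly {ι : Type*} [Fintype ι] [DecidableEq ι]
    {M : Matrix ι ι ℝ} (hM : M.IsSymm) (μ : ℝ) :
    M.charpoly.rootMultiplicity μ = finrank ℝ (LinearMap.ker (M - μ • 1).mulVecLin) := by
  rw [← charpoly_toLin', ← LinearMap.finrank_maxGenEigenspace_eq,
    hM.isFinitelySemisimple_toLin'.maxGenEigenspace_eq_eigenspace, Module.End.eigenspace_def,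
    Module.End.one_eq_id, ← toLin'_one, ← map_smul, ← map_sub]
  rfl

namespace SimpleGraph

variable {V : Type*} (G : SimpleGraph V)

def branch (z w : V) : Set V := {j | ∃ p : G.Walk w j, z ∉ p.support}

variable {G}

lemma notMem_branch (z w : V) : z ∉ G.branch z w :=
  fun ⟨p, hp⟩ => hp p.end_mem_support

lemma mem_branch_self {z w : V} (h : z ≠ w) : w ∈ G.branch z w :=
  ⟨.nil, by simpa using h⟩

lemma mem_branch_of_adj {z w j k : V} (hj : j ∈ G.branch z w) (hjk : G.Adj j k) (hk : k ≠ z) :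
    k ∈ G.branch z w := by
  obtain ⟨p, hp⟩ := hj
  refine ⟨p.concat hjk, ?_⟩
  simpa [Walk.support_concat, hp] using hk.symm

lemma IsAcyclic.eq_of_mem_branch_of_adj (hG : G.IsAcyclic) {z w j : V} (hzw : G.Adj z w)
    (hj : j ∈ G.branch z w) (hzj : G.Adj z j) : j = w := by
  classical
  obtain ⟨p, hp⟩ := hj
  by_contra hjw
  let q : G.Walk w j := .cons hzw.symm (.cons hzj .nil)
  have hq : q.IsPath := by
    simp [q, Walk.isPath_def, hzw.ne.symm, hzj.ne, Ne.symm hjw]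
  have hpq : p.toPath = ⟨q, hq⟩ := (hG.subsingleton_path w j).elim _ _
  have hzq : z ∈ q.support := by simp [q]
  exact hp (p.support_toPath_subset_support (by rw [hpq]; exact hzq))

lemma IsAcyclic.mulVec_indicator_branch [Fintype V] [DecidableEq V] {R : Type*} [Semiring R]
    (hG : G.IsAcyclic) {B : Matrix V V R} (hB : ∀ i j, i ≠ j → ¬G.Adj i j → B i j = 0)
    {x : V → R} (hx : B *ᵥ x = 0) {z w : V} (hzw : G.Adj z w) (hxz : x z = 0) :
    B *ᵥ (G.branch z w).indicator x = Pi.single z (B z w * x w) := by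
  have hzC := notMem_branch (G := G) z w
  have hne : ∀ {i k}, i ∈ G.branch z w → k ∉ G.branch z w → i ≠ k := fun hi hk h => hk (h ▸ hi)
  ext i
  simp only [mulVec, dotProduct]
  by_cases hiz : i = z
  · rw [hiz, Pi.single_eq_same, Finset.sum_eq_single w,
      Set.indicator_of_mem (mem_branch_self hzw.ne)]
    · intro k _ hkw
      by_cases hk : k ∈ G.branch z w
      · rw [hB z k (hne hk hzC).symm fun h => hkw (hG.eq_of_mem_branch_of_adj hzw hk h), zero_mul]
      · rw [Set.indicator_of_notMem hk, mul_zero]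
    · simp
  rw [Pi.single_eq_of_ne hiz]
  by_cases hi : i ∈ G.branch z w
  · refine (Finset.sum_congr rfl fun k _ => ?_).trans (congrFun hx i)
    by_cases hk : k ∈ G.branch z w
    · rw [Set.indicator_of_mem hk]
    by_cases hkz : k = z
    · rw [hkz, hxz, Set.indicator_of_notMem hzC]
    simp [hB i k (hne hi hk) fun h => hk (mem_branch_of_adj hi h hkz)]
  · refine Finset.sum_eq_zero fun k _ => ?_
    by_cases hk : k ∈ G.branch z w
    · rw [hB i k (hne hk hi).symm fun h => hi (mem_branch_of_adj hk h.symm hiz), zero_mul]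
    · rw [Set.indicator_of_notMem hk, mul_zero]

lemma IsTree.exists_mulVec_eq_single_of_mulVec_eq_zero [Fintype V] [DecidableEq V] {R : Type*}
    [Semiring R] [NoZeroDivisors R] (hG : G.IsTree) {B : Matrix V V R}
    (hB : ∀ i j, i ≠ j → (B i j ≠ 0 ↔ G.Adj i j)) {x : V → R} (hx : B *ᵥ x = 0) {v : V}
    (hxv : x v = 0) (hx0 : x ≠ 0) : ∃ z y c, y z = 0 ∧ B *ᵥ y = Pi.single z c ∧ c ≠ 0 := by
  obtain ⟨w, hw⟩ := Function.ne_iff.1 hx0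
  obtain ⟨d, -, hdz, hdw⟩ :=
    (hG.connected.preconnected v w).some.exists_boundary_dart {i | x i = 0} hxv hw
  refine ⟨d.fst, (G.branch d.fst d.snd).indicator x, _, Set.indicator_of_notMem
    (notMem_branch _ _) x, hG.isAcyclic.mulVec_indicator_branch
    (fun i j hij h => not_not.1 (mt (hB i j hij).1 h)) hx d.adj hdz,
    mul_ne_zero ((hB _ _ d.adj.ne).2 d.adj) hdw⟩

lemma IsTree.exists_mulVec_eq_single_of_mem_ker_submatrix {n : ℕ}
    {G : SimpleGraph (Fin (n + 1))} (hG : G.IsTree)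
    {R : Type*} [CommSemiring R] [NoZeroDivisors R] {B : Matrix (Fin (n + 1)) (Fin (n + 1)) R}
    (hB : ∀ i j, i ≠ j → (B i j ≠ 0 ↔ G.Adj i j)) {v : Fin (n + 1)} {u : Fin n → R}
    (hu : u ∈ LinearMap.ker (B.submatrix v.succAbove v.succAbove).mulVecLin) (hu0 : u ≠ 0) :
    ∃ z y c, y z = 0 ∧ B *ᵥ y = Pi.single z c ∧ c ≠ 0 := by
  obtain ⟨hxv, hBx⟩ := (mem_map_ker_submatrix_succAbove_iff B v _).1 ⟨u, hu, rfl⟩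
  by_cases hc : (B *ᵥ Fin.insertNthZeroₗ v u) v = 0
  · rw [hc, Pi.single_zero] at hBx
    refine hG.exists_mulVec_eq_single_of_mulVec_eq_zero hB hBx hxv fun h => hu0 ?_
    exact Fin.insertNthZeroₗ_injective v (h.trans (map_zero _).symm)
  · exact ⟨v, _, _, hxv, hBx, hc⟩

end SimpleGraph

theorem parter_wiener_basic_general
    (n : ℕ) (T : SimpleGraph (Fin (n + 1))) (hT : T.IsTree)
    (A : Matrix (Fin (n + 1)) (Fin (n + 1)) ℝ) (hsymm : A.IsSymm)
    (hgraph : ∀ i j : Fin (n + 1), i ≠ j → (A i j ≠ 0 ↔ T.Adj i j))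
    (v : Fin (n + 1)) (lam : ℝ)
    (hAv : (A.submatrix v.succAbove v.succAbove).charpoly.IsRoot lam) :
    ∃ u : Fin (n + 1),
      (A.submatrix u.succAbove u.succAbove).charpoly.rootMultiplicity lam =
        A.charpoly.rootMultiplicity lam + 1 := by
  set B := A - lam • 1
  have hB : B.IsSymm := hsymm.sub (isSymm_one.smul lam)
  have hBgraph : ∀ i j, i ≠ j → (B i j ≠ 0 ↔ T.Adj i j) := fun i j hij => by
    simpa [B, one_apply_ne hij] using hgraph i j hij
  have hmult : ∀ u : Fin (n + 1), (A.submatrix u.succAbove u.succAbove).charpoly.rootMultiplicity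
      lam = finrank ℝ (LinearMap.ker (B.submatrix u.succAbove u.succAbove).mulVecLin) := fun u => by
    have hsub : A.submatrix u.succAbove u.succAbove - lam • 1 =
        B.submatrix u.succAbove u.succAbove := by
      rw [← submatrix_one _ Fin.succAbove_right_injective]
      rfl
    rw [(hsymm.submatrix u.succAbove).rootMultiplicity_charpoly, hsub]
  have hker : LinearMap.ker (B.submatrix v.succAbove v.succAbove).mulVecLin ≠ ⊥ := by
    rw [Ne, ← Submodule.finrank_eq_zero, ← hmult]
    exact Nat.pos_iff_ne_zero.1 ((rootMultiplicity_pos (charpoly_monic _).ne_zero).2 hAv)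
  obtain ⟨u, hu, hu0⟩ := Submodule.exists_mem_ne_zero_of_ne_bot hker
  obtain ⟨z, y, c, hyz, hBy, hc⟩ := hT.exists_mulVec_eq_single_of_mem_ker_submatrix hBgraph hu hu0
  refine ⟨z, ?_⟩
  rw [hmult, hsymm.rootMultiplicity_charpoly,
    hB.finrank_ker_submatrix_succAbove_eq_add_one hyz hBy hc]

/-- Parter–Wiener theorem (basic form): if `lam` is an eigenvalue of both `A` and
`A(v)` for some vertex `v` of the tree, then some vertex `u` is Parter:
deleting it increases the multiplicity of `lam` by one. -/
theorem parter_wiener_basic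
    (n : ℕ) (T : SimpleGraph (Fin (n + 1))) (hT : T.IsTree)
    (A : Matrix (Fin (n + 1)) (Fin (n + 1)) ℝ) (hsymm : A.IsSymm)
    (hgraph : ∀ i j : Fin (n + 1), i ≠ j → (A i j ≠ 0 ↔ T.Adj i j))
    (v : Fin (n + 1)) (lam : ℝ)
    (hA : A.charpoly.IsRoot lam)
    (hAv : (A.submatrix v.succAbove v.succAbove).charpoly.IsRoot lam) :
    ∃ u : Fin (n + 1),
      (A.submatrix u.succAbove u.succAbove).charpoly.rootMultiplicity lam =
        A.charpoly.rootMultiplicity lam + 1 :=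
  parter_wiener_basic_general n T hT A hsymm hgraph v lam hAv
end

section
/- Let T be a tree and A a real symmetric matrix with graph T. Then at least two eigenvalues of A have multiplicity 1; in particular the smallest and the largest eigenvalues of A each have multiplicity 1. -/
/-!
Signing every vertex of a tree by the product of the signs of the entries of `A` along its path
from a fixed root gives a diagonal `±1` matrix `D` such that `D A D` has nonnegative off-diagonal
entries, positive exactly on the edges of the tree. For such a matrix, a Perron–Frobenius
argument applies to the top eigenvalue `t`: if `x` is an eigenvector then `|x|` has at least the
same Rayleigh quotient, hence is an eigenvector too, and a zero coordinate of `|x|` spreads to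
its neighbours and, by connectedness, everywhere. So top eigenvectors vanish nowhere, and a
space of vectors that vanish nowhere has dimension at most one. Applying this to `A` and `-A`
makes both extreme eigenvalues simple; they differ because `A` has at least two eigenvalues.
-/

open Matrix Module Module.End Finset

theorem SimpleGraph.Reachable.of_adj_imp {V : Type*} {G : SimpleGraph V} {P : V → Prop}
    (hP : ∀ u v, G.Adj u v → P u → P v) {u v : V} (huv : G.Reachable u v) (hu : P u) : P v := by
  obtain ⟨p⟩ := huv
  induction p with
  | nil => exact hu
  | cons h _ ih => exact ih (hP _ _ h hu)

theorem SimpleGraph.IsTree.exists_abs_eq_one_mul_mul_nonneg {V : Type*} {G : SimpleGraph V}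
    (hG : G.IsTree) (w : V → V → ℝ) (hw : ∀ u v, w u v = w v u) :
    ∃ s : V → ℝ, (∀ v, |s v| = 1) ∧ ∀ u v, G.Adj u v → 0 ≤ s u * s v * w u v := by
  obtain ⟨r⟩ := hG.connected.nonempty
  choose P hP using fun v => (hG.existsUnique_path r v).exists
  let ε : V → V → ℝ := fun u v => if 0 ≤ w u v then 1 else -1
  have hε_abs (u v : V) : |ε u v| = 1 := by unfold ε; split_ifs <;> simp
  have hε_mul (u v : V) : 0 ≤ ε u v * w u v := by unfold ε; split_ifs <;> linarith
  let s : V → ℝ := fun v => ((P v).darts.map fun d => ε d.fst d.snd).prod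
  have hs_abs (v : V) : |s v| = 1 := by
    simp only [s]
    induction (P v).darts with
    | nil => simp
    | cons d l ih => simp [abs_mul, ih, hε_abs]
  have hs_concat {u v : V} (h : G.Adj u v) (hPv : P v = (P u).concat h) :
      0 ≤ s u * s v * w u v := by
    have hsv : s v = s u * ε u v := by simp [s, hPv, SimpleGraph.Walk.darts_concat]
    have hsu : s u * s u = 1 := by rw [← abs_mul_abs_self, hs_abs, one_mul]
    calc 0 ≤ ε u v * w u v := hε_mul u v
      _ = s u * s v * w u v := by rw [hsv, ← mul_assoc, hsu, one_mul]
  refine ⟨s, hs_abs, fun u v h => ?_⟩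
  -- In a tree, of two adjacent vertices one lies on the root path of the other.
  by_cases hu : u ∈ (P v).support
  · exact hs_concat h (hG.isAcyclic.path_concat (hP u) (hP v) h hu)
  · have hv := hG.isAcyclic.mem_support_of_ne_mem_support_of_adj_of_isPath (hP u) (hP v) h hu
    have := hs_concat h.symm (hG.isAcyclic.path_concat (hP v) (hP u) h.symm hv)
    rwa [mul_comm (s v), hw] at this

theorem Submodule.finrank_le_one_of_forall_apply_ne_zero {K ι : Type*} [Field K]
    (W : Submodule K (ι → K)) (hW : ∀ x ∈ W, x ≠ 0 → ∀ i, x i ≠ 0) : finrank K W ≤ 1 := by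
  by_cases hbot : W = ⊥
  · rw [hbot, finrank_bot]
    exact zero_le_one
  obtain ⟨u, hu, hu0⟩ := W.ne_bot_iff.mp hbot
  obtain ⟨i, hi⟩ := Function.ne_iff.mp hu0
  rw [Pi.zero_apply] at hi
  refine finrank_le_one ⟨u, hu⟩ fun w => ⟨w.1 i / u i, ?_⟩
  by_contra hne
  have hmem : w.1 - (w.1 i / u i) • u ∈ W := W.sub_mem w.2 (W.smul_mem _ hu)
  exact hW _ hmem (sub_ne_zero.mpr fun h => hne (Subtype.ext h.symm)) i
    (by simp [div_mul_cancel₀ _ hi])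

theorem Module.End.eigenspace_neg_neg {R M : Type*} [CommRing R] [AddCommGroup M] [Module R M]
    (f : Module.End R M) (μ : R) : eigenspace (-f) (-μ) = eigenspace f μ := by
  ext x
  simp [neg_smul]

namespace Matrix

variable {ι : Type*} [Fintype ι]

lemma dotProduct_mulVec_le_abs {B : Matrix ι ι ℝ} (hB : ∀ i j, i ≠ j → 0 ≤ B i j)
    (x : ι → ℝ) : x ⬝ᵥ (B *ᵥ x) ≤ |x| ⬝ᵥ (B *ᵥ |x|) := by
  simp only [dotProduct, mulVec, Finset.mul_sum, Pi.abs_apply]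
  refine sum_le_sum fun i _ => sum_le_sum fun j _ => ?_
  by_cases hij : i = j
  · subst hij
    exact le_of_eq (by linear_combination -(B i i) * abs_mul_abs_self (x i))
  · calc x i * (B i j * x j) ≤ |x i * (B i j * x j)| := le_abs_self _
      _ = |x i| * (B i j * |x j|) := by rw [abs_mul, abs_mul, abs_of_nonneg (hB i j hij)]

lemma apply_eq_zero_of_mulVec_apply_eq_zero {B : Matrix ι ι ℝ}
    (hB : ∀ i j, i ≠ j → 0 ≤ B i j) {y : ι → ℝ} (hy : 0 ≤ y) {i j : ι} (hyi : y i = 0)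
    (hBy : (B *ᵥ y) i = 0) (hBij : B i j ≠ 0) : y j = 0 := by
  have hterm (k : ι) (_ : k ∈ univ) : 0 ≤ B i k * y k := by
    by_cases hik : i = k
    · simp [← hik, hyi]
    · exact mul_nonneg (hB i k hik) (hy k)
  have := (sum_eq_zero_iff_of_nonneg hterm).mp hBy j (mem_univ j)
  exact (mul_eq_zero.mp this).resolve_left hBij

variable [DecidableEq ι] {t : ℝ}

lemma PosSemidef.mulVec_eq_smul_of_le {B : Matrix ι ι ℝ} (hB : (t • 1 - B).PosSemidef)
    {x : ι → ℝ} (hx : t * (x ⬝ᵥ x) ≤ x ⬝ᵥ (B *ᵥ x)) : B *ᵥ x = t • x := by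
  have hquad : star x ⬝ᵥ ((t • 1 - B) *ᵥ x) = t * (x ⬝ᵥ x) - x ⬝ᵥ (B *ᵥ x) := by
    simp [sub_mulVec, dotProduct_sub, smul_mulVec]
  have hzero := (hB.dotProduct_mulVec_zero_iff x).mp
    (le_antisymm (hquad ▸ sub_nonpos.mpr hx) (hB.dotProduct_mulVec_nonneg x))
  rw [sub_mulVec, smul_mulVec, one_mulVec, sub_eq_zero] at hzero
  exact hzero.symm

theorem apply_ne_zero_of_mulVec_eq_smul {G : SimpleGraph ι} (hG : G.Preconnected)
    {B : Matrix ι ι ℝ} (hB : ∀ i j, i ≠ j → 0 ≤ B i j) (hBG : ∀ i j, G.Adj i j → B i j ≠ 0)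
    (hpsd : (t • 1 - B).PosSemidef) {x : ι → ℝ} (hx : B *ᵥ x = t • x) (hx0 : x ≠ 0) (i : ι) :
    x i ≠ 0 := by
  have habs : B *ᵥ |x| = t • |x| := by
    refine hpsd.mulVec_eq_smul_of_le ?_
    calc t * (|x| ⬝ᵥ |x|) = x ⬝ᵥ (B *ᵥ x) := by
          simp [hx, dotProduct, abs_mul_abs_self, Finset.mul_sum, mul_left_comm]
      _ ≤ |x| ⬝ᵥ (B *ᵥ |x|) := dotProduct_mulVec_le_abs hB x
  have hprop (j k : ι) (hjk : G.Adj j k) (hj : |x j| = 0) : |x k| = 0 :=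
    apply_eq_zero_of_mulVec_apply_eq_zero hB (abs_nonneg x) hj
      (by rw [habs, Pi.smul_apply, Pi.abs_apply, hj, smul_zero]) (hBG j k hjk)
  intro hxi
  exact hx0 <| funext fun j => abs_eq_zero.mp <| (hG i j).of_adj_imp hprop (by simp [hxi])

theorem apply_ne_zero_of_mulVec_eq_smul_of_signing {G : SimpleGraph ι} (hG : G.Preconnected)
    {A : Matrix ι ι ℝ} {s : ι → ℝ} (hs : ∀ i, |s i| = 1)
    (hA : ∀ i j, i ≠ j → 0 ≤ s i * s j * A i j) (hAG : ∀ i j, G.Adj i j → A i j ≠ 0)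
    (hpsd : (t • 1 - A).PosSemidef) {x : ι → ℝ} (hx : A *ᵥ x = t • x) (hx0 : x ≠ 0) (i : ι) :
    x i ≠ 0 := by
  let D : Matrix ι ι ℝ := diagonal s
  have hDD : D * D = 1 := by
    rw [diagonal_mul_diagonal, ← diagonal_one]
    congr with i
    rw [← abs_mul_abs_self, hs, one_mul]
  have hDAD (i j : ι) : (D * A * D) i j = s i * s j * A i j := by
    simp only [D, mul_diagonal, diagonal_mul]
    ring
  have hs0 (k : ι) : s k ≠ 0 := fun h => by simpa [h] using hs k
  have hBG (i j : ι) (hij : G.Adj i j) : (D * A * D) i j ≠ 0 := by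
    rw [hDAD]
    exact mul_ne_zero (mul_ne_zero (hs0 i) (hs0 j)) (hAG i j hij)
  have hpsd' : (t • 1 - D * A * D).PosSemidef := by
    have h := hpsd.conjTranspose_mul_mul_same D
    rwa [diagonal_conjTranspose, star_trivial, Matrix.mul_sub, Matrix.sub_mul, Matrix.mul_smul,
      mul_one, Matrix.smul_mul, hDD] at h
  have hDx : (D * A * D) *ᵥ (D *ᵥ x) = t • (D *ᵥ x) := by
    rw [mulVec_mulVec, mul_assoc, hDD, mul_one, ← mulVec_mulVec, hx, mulVec_smul]
  have hDx0 : D *ᵥ x ≠ 0 := fun h => hx0 <| by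
    rw [← one_mulVec x, ← hDD, ← mulVec_mulVec, h, mulVec_zero]
  have := apply_ne_zero_of_mulVec_eq_smul hG (fun i j hij => hDAD i j ▸ hA i j hij) hBG hpsd'
    hDx hDx0 i
  rw [mulVec_diagonal] at this
  exact right_ne_zero_of_mul this

namespace IsHermitian

variable {A : Matrix ι ι ℝ}

lemma rootMultiplicity_charpoly (hA : A.IsHermitian) (t : ℝ) :
    A.charpoly.rootMultiplicity t = #{i | hA.eigenvalues i = t} := by
  rw [← Polynomial.count_roots, hA.roots_charpoly_eq_eigenvalues, Multiset.count_map,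
    Finset.card, Finset.filter_val]
  simp [eq_comm]

lemma posSemidef_smul_one_sub (hA : A.IsHermitian) (ht : ∀ i, hA.eigenvalues i ≤ t) :
    (t • 1 - A).PosSemidef := by
  refine posSemidef_iff_isHermitian_and_spectrum_nonneg.mpr
    ⟨(isHermitian_one.smul (.all t)).sub hA, ?_⟩
  rw [← Algebra.algebraMap_eq_smul_one, ← spectrum.singleton_sub_eq,
    hA.spectrum_real_eq_range_eigenvalues]
  rintro _ ⟨_, rfl, _, ⟨i, rfl⟩, rfl⟩
  simpa using ht i

lemma posSemidef_sub_smul_one (hA : A.IsHermitian) (ht : ∀ i, t ≤ hA.eigenvalues i) :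
    (A - t • 1).PosSemidef := by
  refine posSemidef_iff_isHermitian_and_spectrum_nonneg.mpr
    ⟨hA.sub (isHermitian_one.smul (.all t)), ?_⟩
  rw [← Algebra.algebraMap_eq_smul_one, ← spectrum.sub_singleton_eq,
    hA.spectrum_real_eq_range_eigenvalues]
  rintro _ ⟨_, ⟨i, rfl⟩, _, rfl, rfl⟩
  simpa using ht i

lemma card_eigenvalues_eq_le_finrank_eigenspace (hA : A.IsHermitian) (t : ℝ) :
    #{i | hA.eigenvalues i = t} ≤ finrank ℝ (eigenspace (toLin' A) t) := by
  let S : Finset ι := {i | hA.eigenvalues i = t}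
  let v : S → ι → ℝ := fun i => WithLp.ofLp (hA.eigenvectorBasis i)
  have hv : LinearIndependent ℝ v :=
    (hA.eigenvectorBasis.orthonormal.linearIndependent.map' _
      (WithLp.linearEquiv 2 ℝ (ι → ℝ)).ker).comp _ Subtype.val_injective
  have hspan : Submodule.span ℝ (Set.range v) ≤ eigenspace (toLin' A) t := by
    rw [Submodule.span_le]
    rintro _ ⟨⟨i, hi⟩, rfl⟩
    rw [SetLike.mem_coe, mem_eigenspace_iff, toLin'_apply, hA.mulVec_eigenvectorBasis,
      (mem_filter.mp hi).2]
  simpa [finrank_span_eq_card hv] using Submodule.finrank_mono hspan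

lemma rootMultiplicity_charpoly_eigenvalues_eq_one (hA : A.IsHermitian) (i : ι)
    (h : finrank ℝ (eigenspace (toLin' A) (hA.eigenvalues i)) ≤ 1) :
    A.charpoly.rootMultiplicity (hA.eigenvalues i) = 1 := by
  rw [hA.rootMultiplicity_charpoly]
  exact le_antisymm ((hA.card_eigenvalues_eq_le_finrank_eigenspace _).trans h)
    (card_pos.mpr ⟨i, mem_filter.mpr ⟨mem_univ i, rfl⟩⟩)

theorem finrank_eigenspace_le_one_of_isTree {T : SimpleGraph ι} (hT : T.IsTree)
    (hA : A.IsHermitian) (hgraph : ∀ i j, i ≠ j → (A i j ≠ 0 ↔ T.Adj i j))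
    (hpsd : (t • 1 - A).PosSemidef) : finrank ℝ (eigenspace (toLin' A) t) ≤ 1 := by
  obtain ⟨s, hs, hsA⟩ := hT.exists_abs_eq_one_mul_mul_nonneg (fun i j => A i j)
    fun i j => by simpa using hA.apply j i
  refine Submodule.finrank_le_one_of_forall_apply_ne_zero _ fun x hx hx0 => ?_
  rw [mem_eigenspace_iff, toLin'_apply] at hx
  refine apply_ne_zero_of_mulVec_eq_smul_of_signing hT.connected.preconnected hs
    (fun i j hij => ?_) (fun i j h => (hgraph i j h.ne).mpr h) hpsd hx hx0
  by_cases hadj : T.Adj i j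
  · exact hsA i j hadj
  · rw [not_not.mp (mt (hgraph i j hij).mp hadj), mul_zero]

end IsHermitian

end Matrix

/-- For a matrix whose graph is a tree, the smallest and largest eigenvalues are
distinct and each has multiplicity 1; in particular at least two eigenvalues of `A`
have multiplicity 1. -/
theorem tree_extreme_eigenvalues_simple
    (n : ℕ) (hn : 2 ≤ n) (T : SimpleGraph (Fin n)) (hT : T.IsTree)
    (A : Matrix (Fin n) (Fin n) ℝ) (hA : A.IsHermitian)
    (hgraph : ∀ i j : Fin n, i ≠ j → (A i j ≠ 0 ↔ T.Adj i j)) :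
    (⨅ i, hA.eigenvalues i) ≠ (⨆ i, hA.eigenvalues i) ∧
    A.charpoly.rootMultiplicity (⨅ i, hA.eigenvalues i) = 1 ∧
    A.charpoly.rootMultiplicity (⨆ i, hA.eigenvalues i) = 1 := by
  have : Nonempty (Fin n) := ⟨⟨0, by omega⟩⟩
  obtain ⟨imin, himin⟩ : ∃ i, hA.eigenvalues i = ⨅ i, hA.eigenvalues i :=
    exists_eq_ciInf_of_finite
  obtain ⟨imax, himax⟩ : ∃ i, hA.eigenvalues i = ⨆ i, hA.eigenvalues i :=
    exists_eq_ciSup_of_finite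
  have hle (i : Fin n) : hA.eigenvalues i ≤ hA.eigenvalues imax :=
    himax ▸ le_ciSup (Finite.bddAbove_range _) i
  have hge (i : Fin n) : hA.eigenvalues imin ≤ hA.eigenvalues i :=
    himin ▸ ciInf_le (Finite.bddBelow_range _) i
  have hmax := hA.rootMultiplicity_charpoly_eigenvalues_eq_one imax
    (hA.finrank_eigenspace_le_one_of_isTree hT hgraph (hA.posSemidef_smul_one_sub hle))
  have hmin := hA.rootMultiplicity_charpoly_eigenvalues_eq_one imin <| by
    rw [← eigenspace_neg_neg, ← map_neg]
    refine hA.neg.finrank_eigenspace_le_one_of_isTree hT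
      (fun i j hij => by rw [neg_apply, neg_ne_zero, hgraph i j hij]) ?_
    rw [neg_smul, sub_neg_eq_add, neg_add_eq_sub]
    exact hA.posSemidef_sub_smul_one hge
  rw [← himin, ← himax]
  refine ⟨fun h => ?_, hmin, hmax⟩
  rw [hA.rootMultiplicity_charpoly, filter_true_of_mem fun i _ => le_antisymm (hle i) (h ▸ hge i),
    card_univ, Fintype.card_fin] at hmax
  omega
end
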